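/- arXiv:1508.06808 — 8 statements merged into one kernel-verified Lean document; each statement's English description precedes it below -/
import Mathlib

section
/- Let G be a Noetherian group (every subgroup is finitely generated) and H a subgroup of G. If g ∈ G is such that the index of gHg⁻¹ ∩ H in H is finite, then g normalizes H*, where H* is the smallest subgroup of G containing H that is closed under taking roots (i.e., if x^i ∈ H* for some positive integer i then x ∈ H*). -/
/-
Automorphisms carry root-closed subgroups to root-closed subgroups. If `gHg⁻¹ ∩ H` has
finite index in `H`, every element of `H` has a power in `gHg⁻¹ ⊆ gH*g⁻¹`, so `H ≤ gH*g⁻¹`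
and hence `H* ≤ gH*g⁻¹`. Conjugating repeatedly gives an ascending chain `H* ≤ gH*g⁻¹ ≤ g²H*g⁻² ≤ ⋯`,
which stabilizes in a Noetherian group; cancelling the powers of `g` yields `gH*g⁻¹ = H*`.
-/

/-- The root closure `H*` of a subgroup `H` of `G`: the smallest subgroup of `G`
containing `H` such that whenever `x ^ i` lies in it for some positive integer `i`,
so does `x`. -/
def rootClosure {G : Type*} [Group G] (H : Subgroup G) : Subgroup G :=
  sInf {N : Subgroup G | H ≤ N ∧ ∀ (x : G) (i : ℕ), 0 < i → x ^ i ∈ N → x ∈ N}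

open Pointwise

theorem MulAction.smul_eq_self_of_le_smul {α β : Type*} [Group α] [PartialOrder β]
    [MulAction α β] [CovariantClass α β HSMul.hSMul LE.le] [WellFoundedGT β] {a : α} {x : β}
    (h : x ≤ a • x) : a • x = x := by
  have hmono : Monotone fun n : ℕ => a ^ n • x := monotone_nat_of_le_succ fun n => by
    rw [pow_succ, mul_smul]
    exact smul_mono_right _ h
  obtain ⟨n, hn⟩ := WellFoundedGT.monotone_chain_condition ⟨_, hmono⟩
  apply smul_left_cancel (a ^ n)
  rw [← mul_smul, ← pow_succ]
  exact (hn (n + 1) n.le_succ).symm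

namespace Subgroup

variable {G : Type*} [Group G]

theorem wellFoundedGT_of_forall_fg (hG : ∀ N : Subgroup G, N.FG) :
    WellFoundedGT (Subgroup G) := by
  refine wellFoundedGT_iff_monotone_chain_condition.2 fun a => ?_
  obtain ⟨S, hS⟩ := hG (⨆ n, a n)
  have hmem : ∀ x ∈ S, ∃ n, x ∈ a n := fun x hx =>
    (mem_iSup_of_directed a.monotone.directed_le).1 (hS ▸ subset_closure hx)
  choose! idx hidx using hmem
  refine ⟨S.sup idx, fun m hm => le_antisymm (a.monotone hm) ?_⟩
  calc a m ≤ ⨆ n, a n := le_iSup a m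
    _ = closure S := hS.symm
    _ ≤ a (S.sup idx) :=
      (closure_le _).2 fun x hx => a.monotone (Finset.le_sup hx) (hidx x hx)

def IsRootClosed (N : Subgroup G) : Prop :=
  ∀ (x : G) (i : ℕ), 0 < i → x ^ i ∈ N → x ∈ N

theorem IsRootClosed.pointwise_smul {α : Type*} [Group α] [MulDistribMulAction α G]
    {N : Subgroup G} (hN : N.IsRootClosed) (a : α) : (a • N).IsRootClosed := by
  intro x i hi hx
  rw [mem_pointwise_smul_iff_inv_smul_mem, smul_pow'] at hx
  rw [mem_pointwise_smul_iff_inv_smul_mem]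
  exact hN _ i hi hx

theorem le_rootClosure (H : Subgroup G) : H ≤ rootClosure H :=
  le_sInf fun _ hN => hN.1

theorem isRootClosed_rootClosure (H : Subgroup G) : (rootClosure H).IsRootClosed :=
  fun x i hi hx => mem_sInf.2 fun N hN => hN.2 x i hi (mem_sInf.1 hx N hN)

theorem rootClosure_le {H N : Subgroup G} (hHN : H ≤ N) (hN : N.IsRootClosed) :
    rootClosure H ≤ N :=
  sInf_le ⟨hHN, hN⟩

theorem rootClosure_le_smul_of_relIndex_ne_zero {α : Type*} [Group α]
    [MulDistribMulAction α G] {H : Subgroup G} {a : α} (h : (a • H).relIndex H ≠ 0) :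
    rootClosure H ≤ a • rootClosure H := by
  refine rootClosure_le (fun x hx => ?_) ((isRootClosed_rootClosure H).pointwise_smul a)
  obtain ⟨n, hn, -, hxn⟩ := exists_pow_mem_of_relIndex_ne_zero h hx
  exact (isRootClosed_rootClosure H).pointwise_smul a x n hn
    (smul_mono_right a (le_rootClosure H) (mem_inf.1 hxn).1)

end Subgroup

/-- Let `G` be a Noetherian group (every subgroup is finitely
generated) and `H` a subgroup. If `g ∈ G` is such that `g H g⁻¹ ∩ H` has finite
index in `H`, then `g` normalizes `H*`. -/
theorem stmt0 {G : Type*} [Group G] (hNoeth : ∀ N : Subgroup G, N.FG)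
    (H : Subgroup G) (g : G)
    (hfin : (H.map (MulAut.conj g).toMonoidHom).relIndex H ≠ 0) :
    g ∈ Subgroup.normalizer (rootClosure H : Set G) := by
  have := Subgroup.wellFoundedGT_of_forall_fg hNoeth
  rw [Subgroup.mem_normalizer_iff_map_conj_eq]
  -- `MulAut.conj g • K` unfolds to `K.map (MulAut.conj g)`, in `hfin` as well as in the goal.
  exact MulAction.smul_eq_self_of_le_smul
    (Subgroup.rootClosure_le_smul_of_relIndex_ne_zero (a := MulAut.conj g) hfin)
end

section
/- Let G be a finitely generated nilpotent group and H₁, H₂ subgroups of G. Then (H₁ ∩ H₂)* = H₁* ∩ H₂*, where K* denotes the set of all elements g ∈ G such that g^i ∈ K for some positive integer i (which is a subgroup containing K with finite index of K in K*). -/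
/-- The set of roots of a subgroup `H` of `G`:
all `g ∈ G` with `g ^ i ∈ H` for some positive integer `i`. -/
def rootSet {G : Type*} [Group G] (H : Subgroup G) : Set G :=
  {g : G | ∃ i : ℕ, 0 < i ∧ g ^ i ∈ H}

/-- In a finitely generated nilpotent group, the set of roots of an
intersection of two subgroups is the intersection of their sets of roots:
`(H₁ ∩ H₂)* = H₁* ∩ H₂*`. -/
theorem stmt3 {G : Type*} [Group G] [Group.FG G] [Group.IsNilpotent G]
    (H₁ H₂ : Subgroup G) :
    rootSet (H₁ ⊓ H₂) = rootSet H₁ ∩ rootSet H₂ := by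
  ext g
  constructor
  · rintro ⟨i, hi, hg₁, hg₂⟩
    exact ⟨⟨i, hi, hg₁⟩, ⟨i, hi, hg₂⟩⟩
  · rintro ⟨⟨i, hi, hgi⟩, ⟨j, hj, hgj⟩⟩
    refine ⟨i * j, Nat.mul_pos hi hj, ?_, ?_⟩
    · rw [pow_mul]; exact pow_mem hgi j
    · rw [mul_comm, pow_mul]; exact pow_mem hgj i
end

section
/- Let G be the free group on two generators x and y, and let H be the subgroup generated by the elements x⁻ⁿyxⁿ for all positive integers n. Then x ∈ S(H) (i.e., xHx⁻¹ ∩ H has finite index in H, in fact xHx⁻¹ ⊇ H), but x does not normalize H* = H; in particular y ∈ xHx⁻¹ but y ∉ H. -/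
open FreeGroup Subgroup SemidirectProduct

def Subgroup.IsRootClosed_s5 {G : Type*} [Group G] (H : Subgroup G) : Prop :=
  ∀ (g : G) (n : ℕ), 0 < n → g ^ n ∈ H → g ∈ H

theorem Subgroup.IsRootClosed_s5.rootClosure_eq {G : Type*} [Group G] {H : Subgroup G}
    (hH : H.IsRootClosed_s5) : rootClosure H = H :=
  le_antisymm (sInf_le ⟨le_rfl, hH⟩) (le_sInf fun _ hN ↦ hN.1)

theorem Subgroup.IsRootClosed_s5.comap {G G' : Type*} [Group G] [Group G'] {H : Subgroup G'}
    (hH : H.IsRootClosed_s5) (f : G →* G') : (H.comap f).IsRootClosed_s5 :=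
  fun g n hn hg ↦ hH (f g) n hn (by simpa using hg)

theorem SemidirectProduct.isRootClosed_map_inl {N G : Type*} [Group N] [Group G]
    [IsMulTorsionFree G] {φ : G →* MulAut N} {K : Subgroup N} (hK : K.IsRootClosed_s5) :
    (K.map (inl : N →* N ⋊[φ] G)).IsRootClosed_s5 := by
  rintro a n hn ⟨w, hw, hwa⟩
  have hright : a.right = 1 := by
    rw [← pow_eq_one_iff_left hn.ne', ← rightHom_eq_right, ← _root_.map_pow, ← hwa, rightHom_inl]
  obtain ⟨u, rfl⟩ : ∃ u, a = inl u := ⟨a.left, by rw [← inl_left_mul_inr_right a, hright]; simp⟩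
  rw [← _root_.map_pow, inl_inj] at hwa
  exact mem_map_of_mem _ (hK u n hn (hwa ▸ hw))

namespace FreeGroup

variable {α : Type*} (s : Set α)

open Classical in
noncomputable def retract : FreeGroup α →* FreeGroup α :=
  FreeGroup.lift fun a ↦ if a ∈ s then of a else 1

theorem retract_of_mem_closure {g : FreeGroup α} (hg : g ∈ closure (of '' s)) :
    retract s g = g := by
  have : closure (of '' s) ≤ (retract s).eqLocus (MonoidHom.id _) := by
    rw [closure_le]
    rintro _ ⟨a, ha, rfl⟩
    show retract s (of a) = of a
    simp [retract, ha]
  exact this hg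

theorem retract_mem_closure (g : FreeGroup α) : retract s g ∈ closure (of '' s) := by
  refine range_lift_le ?_ ⟨g, rfl⟩
  rintro _ ⟨a, rfl⟩
  dsimp only
  split_ifs with ha
  · exact subset_closure ⟨a, ha, rfl⟩
  · exact one_mem _

theorem isRootClosed_closure_image_of : (closure (of '' s)).IsRootClosed_s5 := by
  intro g n hn hg
  have : retract s g ^ n = g ^ n := by rw [← map_pow, retract_of_mem_closure s hg]
  rw [← IsMulTorsionFree.pow_left_injective hn.ne' this]
  exact retract_mem_closure s g

theorem of_mem_closure_image_of_iff {a : α} : of a ∈ closure (of '' s) ↔ a ∈ s := by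
  refine ⟨fun h ↦ ?_, fun h ↦ subset_closure ⟨a, h, rfl⟩⟩
  by_contra ha
  have := retract_of_mem_closure s h
  simp [retract, ha] at this

end FreeGroup

noncomputable def indexShift : Multiplicative ℤ →* MulAut (FreeGroup ℤ) :=
  zpowersHom _ (freeGroupCongr (Equiv.addRight 1))

theorem indexShift_apply_of (k j : ℤ) : indexShift (.ofAdd k) (of j) = of (j + k) := by
  induction k using Int.induction_on generalizing j with
  | zero => simp [indexShift]
  | succ k ih =>
    simp only [indexShift, zpowersHom_apply, toAdd_ofAdd, zpow_add_one, MulAut.mul_apply,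
      freeGroupCongr_apply, map.of, Equiv.coe_addRight] at ih ⊢
    rw [ih]; ring_nf
  | pred k ih =>
    simp only [indexShift, zpowersHom_apply, toAdd_ofAdd, zpow_sub_one, MulAut.mul_apply,
      MulAut.inv_apply, freeGroupCongr_symm, freeGroupCongr_apply, map.of, Equiv.coe_addRight,
      Equiv.addRight_symm] at ih ⊢
    rw [ih]; ring_nf

noncomputable def conjugatesOfY : FreeGroup ℤ →* FreeGroup Bool :=
  FreeGroup.lift fun k ↦ of true ^ k * of false * (of true ^ k)⁻¹

noncomputable def toSemidirect : FreeGroup Bool →* FreeGroup ℤ ⋊[indexShift] Multiplicative ℤ :=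
  FreeGroup.lift fun b ↦ if b then inr (.ofAdd 1) else inl (of 0)

noncomputable def ofSemidirect : FreeGroup ℤ ⋊[indexShift] Multiplicative ℤ →* FreeGroup Bool :=
  SemidirectProduct.lift conjugatesOfY (zpowersHom _ (of true)) fun k ↦ by
    refine FreeGroup.ext_hom _ _ fun j ↦ ?_
    rw [← ofAdd_toAdd k]
    simp only [MonoidHom.comp_apply, MulEquiv.coe_toMonoidHom, zpowersHom_apply, toAdd_ofAdd,
      MulAut.conj_apply, indexShift_apply_of, conjugatesOfY, lift_apply_of, zpow_add]
    group

theorem toSemidirect_of_false : toSemidirect (of false) = inl (of 0) := by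
  simp [toSemidirect]

theorem toSemidirect_of_true : toSemidirect (of true) = inr (.ofAdd 1) := by
  simp [toSemidirect]

theorem toSemidirect_zpow_of_true (k : ℤ) :
    toSemidirect (of true ^ k) = inr (.ofAdd k) := by
  rw [_root_.map_zpow, toSemidirect_of_true, ← _root_.map_zpow, ← ofAdd_zsmul, zsmul_one,
    Int.cast_id]

theorem ofSemidirect_comp_toSemidirect : ofSemidirect.comp toSemidirect = MonoidHom.id _ := by
  ext b
  cases b <;> simp [toSemidirect, ofSemidirect, conjugatesOfY]

theorem toSemidirect_comp_conjugatesOfY : toSemidirect.comp conjugatesOfY = inl :=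
  FreeGroup.ext_hom _ _ fun k ↦ by
    rw [MonoidHom.comp_apply, conjugatesOfY, lift_apply_of, _root_.map_mul, _root_.map_mul,
      _root_.map_inv, toSemidirect_zpow_of_true, toSemidirect_of_false, ← _root_.map_inv, ← inl_aut,
      indexShift_apply_of, zero_add]

theorem map_conjugatesOfY_eq_comap (K : Subgroup (FreeGroup ℤ)) :
    K.map conjugatesOfY = (K.map inl).comap toSemidirect := by
  ext g
  constructor
  · rintro ⟨u, hu, rfl⟩
    exact ⟨u, hu, (DFunLike.congr_fun toSemidirect_comp_conjugatesOfY u).symm⟩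
  · rintro ⟨u, hu, hgu⟩
    refine ⟨u, hu, ?_⟩
    calc conjugatesOfY u = ofSemidirect (inl u) := (lift_inl ..).symm
      _ = g := by rw [hgu]; exact DFunLike.congr_fun ofSemidirect_comp_toSemidirect g

theorem closure_conjugates_eq_map_conjugatesOfY :
    closure {w | ∃ n : ℕ, 1 ≤ n ∧ w = (of true ^ n)⁻¹ * of false * of true ^ n} =
      (closure (of '' Set.Iio 0)).map conjugatesOfY := by
  rw [MonoidHom.map_closure, ← Set.image_comp]
  congr 1
  ext w
  simp only [Set.mem_ofPred_eq, Set.mem_image, Set.mem_Iio, Function.comp_apply, conjugatesOfY,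
    lift_apply_of]
  constructor
  · rintro ⟨n, hn, rfl⟩
    exact ⟨-n, by omega, by simp [zpow_neg]⟩
  · rintro ⟨k, hk, rfl⟩
    obtain ⟨n, rfl⟩ : ∃ n : ℕ, k = -n := ⟨k.natAbs, by omega⟩
    exact ⟨n, by omega, by simp [zpow_neg]⟩

/-- Let `G` be the free group on two generators `x`, `y` and `H`
the subgroup generated by the elements `x⁻ⁿ y xⁿ`, `n ≥ 1`. Then `x ∈ S(H)` (in
fact `H ⊆ x H x⁻¹`, so `x H x⁻¹ ∩ H = H` has finite index in `H`), but `x` does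
not normalize `H* = H`; in particular `y ∈ x H x⁻¹` but `y ∉ H`. -/
theorem stmt5 :
    ∀ x y : FreeGroup Bool, x = FreeGroup.of true → y = FreeGroup.of false →
    ∀ H : Subgroup (FreeGroup Bool),
      H = Subgroup.closure {w | ∃ n : ℕ, 1 ≤ n ∧ w = (x ^ n)⁻¹ * y * x ^ n} →
      H ≤ H.map (MulAut.conj x).toMonoidHom ∧
      (H.map (MulAut.conj x).toMonoidHom).relIndex H ≠ 0 ∧
      rootClosure H = H ∧
      x ∉ Subgroup.normalizer (rootClosure H : Set (FreeGroup Bool)) ∧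
      y ∈ H.map (MulAut.conj x).toMonoidHom ∧
      y ∉ H := by
  intro x y hx hy H hH
  subst hx hy
  have hgen (n : ℕ) (hn : 1 ≤ n) : (of true ^ n)⁻¹ * of false * of true ^ n ∈ H :=
    hH ▸ subset_closure ⟨n, hn, rfl⟩
  have hH_comap : H = ((closure (of '' Set.Iio 0)).map inl).comap toSemidirect := by
    rw [hH, closure_conjugates_eq_map_conjugatesOfY, map_conjugatesOfY_eq_comap]
  have hroot : H.IsRootClosed_s5 :=
    hH_comap ▸ (isRootClosed_map_inl (isRootClosed_closure_image_of _)).comap _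
  have hy : of false ∉ H := by
    rw [hH_comap, mem_comap, toSemidirect_of_false, mem_map_iff_mem inl_injective,
      of_mem_closure_image_of_iff]
    simp
  have hle : H ≤ H.map (MulAut.conj (of true)).toMonoidHom := by
    conv_lhs => rw [hH]
    rw [closure_le]
    rintro _ ⟨n, -, rfl⟩
    exact ⟨_, hgen (n + 1) (by omega), by simp [pow_succ]; group⟩
  have hconj : of true * ((of true ^ 1)⁻¹ * of false * of true ^ 1) * (of true)⁻¹ = of false := by
    group
  refine ⟨hle, by rw [relIndex_eq_one.2 hle]; exact one_ne_zero, hroot.rootClosure_eq, ?_,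
    ⟨_, hgen 1 le_rfl, hconj⟩, hy⟩
  rw [hroot.rootClosure_eq]
  exact fun hx ↦ hy (hconj ▸ (mem_normalizer_iff.1 hx _).1 (hgen 1 le_rfl))
end

section
/- Let G = SL₂(ℤ) and H the subgroup of upper-triangular matrices in G (lower-left entry zero). Then S(H) = H, i.e., for g ∈ G, the subgroup gHg⁻¹ ∩ H has finite index in H if and only if g ∈ H. -/
/-!
Write `c` for the lower-left entry of `g`. An element of `H` has diagonal `±(1, 1)`, so it is
`x = ±[[1, b], [0, 1]]`, and the lower-left entry of `g⁻¹ x g` is `-c² b`. Hence if `c ≠ 0`,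
the intersection `g H g⁻¹ ∩ H` is contained in `{±1}`, which has infinite index in the
infinite group `H ⊇ {[[1, n], [0, 1]]}`. If `c = 0`, then `g` normalizes `H`.
-/

open Matrix

/-- The subgroup of upper-triangular matrices (lower-left entry zero) in `SL₂(ℤ)`. -/
def upperTriSL2 : Subgroup (Matrix.SpecialLinearGroup (Fin 2) ℤ) where
  carrier := {g | (g : Matrix (Fin 2) (Fin 2) ℤ) 1 0 = 0}
  one_mem' := by simp [Matrix.SpecialLinearGroup.coe_one]
  mul_mem' := by
    intro a b ha hb
    simp only [Set.mem_setOf_eq, Matrix.SpecialLinearGroup.coe_mul] at *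
    rw [Matrix.mul_apply, Fin.sum_univ_two, ha, hb]
    ring
  inv_mem' := by
    intro a ha
    simp only [Set.mem_setOf_eq] at *
    rw [Matrix.SpecialLinearGroup.coe_inv, Matrix.adjugate_fin_two]
    simp [ha]

open scoped MatrixGroups

theorem Subgroup.relIndex_eq_zero_of_finite_inf {G : Type*} [Group G] {K H : Subgroup G}
    [Infinite H] (hK : Finite ↥(K ⊓ H)) : K.relIndex H = 0 := by
  rw [← inf_relIndex_left, inf_comm]
  by_contra hfin
  have : Finite ((K ⊓ H).subgroupOf H) :=
    .of_equiv _ (subgroupOfEquivOfLe inf_le_right).symm.toEquiv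
  have := ((K ⊓ H).subgroupOf H).finite_iff_finite_and_finiteIndex.2 ⟨this, ⟨hfin⟩⟩
  exact not_finite H

local notation:1024 "↑ₘ" A:1024 => ((A : SL(2, ℤ)) : Matrix (Fin 2) (Fin 2) ℤ)

namespace upperTriSL2

open ModularGroup

lemma mem_iff {x : SL(2, ℤ)} : x ∈ upperTriSL2 ↔ ↑ₘx 1 0 = 0 := Iff.rfl

instance : Infinite upperTriSL2 :=
  Infinite.of_injective (fun n : ℤ ↦ (⟨T ^ n, by simp [mem_iff, coe_T_zpow]⟩ : upperTriSL2))
    fun m n h ↦ by simpa [coe_T_zpow] using congr_arg (fun x : upperTriSL2 ↦ ↑ₘx.1 0 1) h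

lemma diag_eq_one_or_neg_one {x : SL(2, ℤ)} (hx : x ∈ upperTriSL2) :
    ↑ₘx 0 0 = 1 ∧ ↑ₘx 1 1 = 1 ∨ ↑ₘx 0 0 = -1 ∧ ↑ₘx 1 1 = -1 := by
  have hdet : ↑ₘx 0 0 * ↑ₘx 1 1 = 1 := by
    simpa [det_fin_two, mem_iff.1 hx] using (det_fin_two ↑ₘx).symm.trans x.det_coe
  exact Int.mul_eq_one_iff_eq_one_or_neg_one.1 hdet

lemma conj_apply_one_zero {x : SL(2, ℤ)} (hx : x ∈ upperTriSL2) (g : SL(2, ℤ)) :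
    ↑ₘ(g⁻¹ * x * g) 1 0 = -↑ₘg 1 0 ^ 2 * ↑ₘx 0 1 := by
  simp only [Matrix.SpecialLinearGroup.coe_mul, Matrix.SpecialLinearGroup.coe_inv,
    adjugate_fin_two, mul_apply, Fin.sum_univ_two]
  rcases diag_eq_one_or_neg_one hx with ⟨h00, h11⟩ | ⟨h00, h11⟩ <;>
  · simp [mem_iff.1 hx, h00, h11]
    ring

lemma eq_one_or_neg_one_of_mem_inf_map_conj {g x : SL(2, ℤ)} (hg : g ∉ upperTriSL2)
    (hx : x ∈ upperTriSL2.map (MulAut.conj g).toMonoidHom ⊓ upperTriSL2) :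
    x = 1 ∨ x = -1 := by
  obtain ⟨hxg, hxH⟩ := Subgroup.mem_inf.1 hx
  rw [Subgroup.mem_map_equiv, MulAut.conj_symm_apply, mem_iff, conj_apply_one_zero hxH] at hxg
  have h01 : ↑ₘx 0 1 = 0 := by
    simpa [mem_iff.not.1 hg] using hxg
  have h10 := mem_iff.1 hxH
  rcases diag_eq_one_or_neg_one hxH with ⟨h00, h11⟩ | ⟨h00, h11⟩
  · left
    ext i j
    fin_cases i <;> fin_cases j <;> simp [h00, h01, h10, h11]
  · right
    ext i j
    fin_cases i <;> fin_cases j <;> simp [h00, h01, h10, h11]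

end upperTriSL2

/-- For `G = SL₂(ℤ)` and `H` the subgroup of upper-triangular
matrices, `S(H) = H`: the subgroup `g H g⁻¹ ∩ H` has finite index in `H` if and
only if `g ∈ H`. -/
theorem stmt6 (g : Matrix.SpecialLinearGroup (Fin 2) ℤ) :
    (upperTriSL2.map (MulAut.conj g).toMonoidHom).relIndex upperTriSL2 ≠ 0 ↔
      g ∈ upperTriSL2 := by
  refine ⟨fun hfin ↦ ?_, fun hg ↦ ?_⟩
  · by_contra hg
    have hinf_sub : ((upperTriSL2.map (MulAut.conj g).toMonoidHom ⊓ upperTriSL2 : Subgroup _) :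
        Set SL(2, ℤ)) ⊆ {1, -1} :=
      fun x hx ↦ upperTriSL2.eq_one_or_neg_one_of_mem_inf_map_conj hg hx
    exact hfin (Subgroup.relIndex_eq_zero_of_finite_inf ((Set.toFinite _).subset hinf_sub))
  · have hconj : upperTriSL2.map (MulAut.conj g).toMonoidHom = upperTriSL2 :=
      Subgroup.mem_normalizer_iff_map_conj_eq.1 (Subgroup.le_normalizer hg)
    rw [hconj, Subgroup.relIndex_self]
    exact one_ne_zero
end

section
/- Let H be a subgroup of infinite index in a group G, and ρ a representation of H over a field K. Then the finitely induced representation ind_H^G(ρ) (sections of the associated bundle over H\G with finite support) has no non-zero finite-dimensional G-subrepresentations. -/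
section IndCore

variable {K : Type} [Field K] {G : Type} [Group G] {V : Type} [AddCommGroup V] [Module K V]

/-- The space of the finitely induced representation `ind_H^G ρ`:
functions `f : G → V` with `f (h * g) = ρ h (f g)` supported on finitely many
right cosets `H * t`. -/
def Ind (H : Subgroup G) (ρ : Representation K H V) : Submodule K (G → V) where
  carrier := {f | (∀ (h : H) (g : G), f (↑h * g) = ρ h (f g)) ∧
    ∃ T : Finset G, ∀ g, f g ≠ 0 → ∃ t ∈ T, ∃ h ∈ H, g = h * t}
  zero_mem' := ⟨fun h g => by simp, ⟨∅, fun g hg => absurd rfl hg⟩⟩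
  add_mem' := by
    classical
    rintro f₁ f₂ ⟨h₁, T₁, hT₁⟩ ⟨h₂, T₂, hT₂⟩
    refine ⟨fun h g => by simp [h₁ h g, h₂ h g], ⟨T₁ ∪ T₂, fun g hg => ?_⟩⟩
    by_cases hf : f₁ g ≠ 0
    · obtain ⟨t, ht, h, hh, rfl⟩ := hT₁ g hf
      exact ⟨t, Finset.mem_union_left _ ht, h, hh, rfl⟩
    · push_neg at hf
      have : f₂ g ≠ 0 := by
        intro h2; exact hg (by simp [Pi.add_apply, hf, h2])
      obtain ⟨t, ht, h, hh, rfl⟩ := hT₂ g this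
      exact ⟨t, Finset.mem_union_right _ ht, h, hh, rfl⟩
  smul_mem' := by
    rintro c f ⟨h₁, T, hT⟩
    refine ⟨fun h g => by simp [h₁ h g], ⟨T, fun g hg => ?_⟩⟩
    have : f g ≠ 0 := fun h0 => hg (by simp [h0])
    exact hT g this

/-- The action of `G` on `Ind H ρ` by right translations. -/
def indRep (H : Subgroup G) (ρ : Representation K H V) : Representation K G (Ind H ρ) where
  toFun x :=
    { toFun := fun f => ⟨fun g => f.1 (g * x),
        ⟨fun h g => by
          show f.1 (↑h * g * x) = ρ h (f.1 (g * x))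
          rw [mul_assoc]; exact f.2.1 h (g * x),
         by
          classical
          obtain ⟨T, hT⟩ := f.2.2
          refine ⟨T.image (· * x⁻¹), fun g hg => ?_⟩
          obtain ⟨t, ht, h, hh, hgt⟩ := hT (g * x) hg
          exact ⟨t * x⁻¹, Finset.mem_image_of_mem _ ht, h, hh, by
            rw [← mul_assoc, ← hgt, mul_assoc, mul_inv_cancel, mul_one]⟩⟩⟩
      map_add' := fun f₁ f₂ => by ext g; rfl
      map_smul' := fun c f => by ext g; rfl }
  map_one' := by ext f g; simp
  map_mul' := fun x y => by ext f g; simp [mul_assoc]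

/-- The natural map `End_H(ρ) → End_G(ind_H^G ρ)`, sending an `H`-equivariant
endomorphism `φ` of `V` to post-composition with `φ`. -/
def endInd (H : Subgroup G) (ρ : Representation K H V) (φ : V →ₗ[K] V)
    (hφ : ∀ (h : H) (v : V), φ (ρ h v) = ρ h (φ v)) : Ind H ρ →ₗ[K] Ind H ρ where
  toFun f := ⟨fun g => φ (f.1 g),
    ⟨fun h g => by
      show φ (f.1 (↑h * g)) = ρ h (φ (f.1 g))
      rw [f.2.1 h g, hφ],
     by
      obtain ⟨T, hT⟩ := f.2.2
      refine ⟨T, fun g hg => hT g (fun h0 => hg ?_)⟩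
      show φ (f.1 g) = 0
      rw [h0, map_zero]⟩⟩
  map_add' := fun f₁ f₂ => by ext g; simp
  map_smul' := fun c f => by ext g; simp

/-- Irreducibility of a representation: the space is non-zero and the only
invariant subspaces are `0` and the whole space. -/
def IsIrredRep {W : Type} [AddCommGroup W] [Module K W] (π : Representation K G W) : Prop :=
  (∃ w : W, w ≠ 0) ∧ ∀ p : Submodule K W, (∀ g : G, ∀ w ∈ p, π g w ∈ p) → p = ⊥ ∨ p = ⊤

/-- The one-dimensional representation attached to a character `χ : H → K*`. -/
def charRep {H : Type} [Group H] (χ : H →* Kˣ) : Representation K H K where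
  toFun h := (χ h : K) • LinearMap.id
  map_one' := by refine LinearMap.ext fun v => ?_; simp
  map_mul' := fun a b => by
    refine LinearMap.ext fun v => ?_
    simp [mul_smul, mul_left_comm]

end IndCore

/-- Auxiliary: the submodule of `Ind H ρ` of functions supported on the cosets
of a fixed finite set `T`. -/
def supportedIn {K : Type} [Field K] {G : Type} [Group G] {V : Type} [AddCommGroup V]
    [Module K V] (H : Subgroup G) (ρ : Representation K H V) (T : Finset G) :
    Submodule K (Ind H ρ) where
  carrier := {f | ∀ g, (f : G → V) g ≠ 0 → ∃ t ∈ T, ∃ h ∈ H, g = h * t}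
  zero_mem' := fun g hg => absurd rfl hg
  add_mem' := by
    intro f₁ f₂ h₁ h₂ g hg
    by_cases hf : (f₁ : G → V) g ≠ 0
    · exact h₁ g hf
    · push_neg at hf
      refine h₂ g fun h0 => hg ?_
      show (f₁ : G → V) g + (f₂ : G → V) g = 0
      rw [hf, h0, add_zero]
  smul_mem' := by
    intro c f hf g hg
    refine hf g fun h0 => hg ?_
    show c • (f : G → V) g = 0
    rw [h0, smul_zero]

/-- If `H` has infinite index in `G`, then the finitely induced
representation `ind_H^G ρ` has no non-zero finite-dimensional `G`-subrepresentation. -/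
theorem stmt7 {K : Type} [Field K] {G : Type} [Group G] {V : Type} [AddCommGroup V]
    [Module K V] (H : Subgroup G) (hinf : H.index = 0) (ρ : Representation K H V)
    (p : Submodule K (Ind H ρ))
    (hinv : ∀ x : G, ∀ f ∈ p, indRep H ρ x f ∈ p)
    (hfd : FiniteDimensional K p) :
    p = ⊥ := by
  classical
  by_contra hp
  obtain ⟨f, hfp, hf0⟩ := (Submodule.ne_bot_iff p).mp hp
  -- p is finitely generated
  have hfg : p.FG := (Submodule.fg_iff_finiteDimensional p).mpr hfd
  obtain ⟨S, hS⟩ := hfg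
  set T : Finset G := S.biUnion (fun s => s.2.2.choose) with hT
  have hle : p ≤ supportedIn H ρ T := by
    rw [← hS, Submodule.span_le]
    intro s hs g hg
    obtain ⟨t, ht, h, hh, rfl⟩ := s.2.2.choose_spec g hg
    exact ⟨t, Finset.mem_biUnion.mpr ⟨s, hs, ht⟩, h, hh, rfl⟩
  -- f is nonzero somewhere
  have hfne : (f : G → V) ≠ 0 := fun h => hf0 (Subtype.ext h)
  obtain ⟨g₀, hg₀⟩ := Function.ne_iff.mp hfne
  -- every element of G lies in some t⁻¹ * H
  have key : ∀ y : G, ∃ t ∈ T, ∃ h ∈ H, y = t⁻¹ * h⁻¹ := by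
    intro y
    set x := y * g₀
    have hx : indRep H ρ x f ∈ supportedIn H ρ T := hle (hinv x f hfp)
    have hval : (indRep H ρ x f : G → V) (g₀ * x⁻¹) ≠ 0 := by
      show (f : G → V) (g₀ * x⁻¹ * x) ≠ 0
      rw [mul_assoc, inv_mul_cancel, mul_one]
      exact hg₀
    obtain ⟨t, ht, h, hh, hgt⟩ := hx _ hval
    refine ⟨t, ht, h, hh, ?_⟩
    have hy : y⁻¹ = h * t := by
      rw [← hgt]; simp [x, mul_assoc]
    rw [← inv_inv y, hy, mul_inv_rev]
  -- hence G⧸H is finite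
  have hsurj : Function.Surjective
      (fun t : T => (QuotientGroup.mk t.1⁻¹ : G ⧸ H)) := by
    intro q
    obtain ⟨y, rfl⟩ := QuotientGroup.mk_surjective q
    obtain ⟨t, ht, h, hh, rfl⟩ := key y
    refine ⟨⟨t, ht⟩, ?_⟩
    apply (QuotientGroup.eq (s := H)).mpr
    simpa using hh
  have hfin : Finite (G ⧸ H) := Finite.of_surjective _ hsurj
  have : H.index ≠ 0 := by
    rw [Subgroup.index]
    exact Nat.card_ne_zero.mpr ⟨⟨QuotientGroup.mk 1⟩, hfin⟩
  exact this hinf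
end

section
/- Let H be a normal subgroup of a group G and ρ an irreducible representation of H over a field K. Suppose the natural ring homomorphism End_H(ρ) → End_G(ind_H^G(ρ)) is an isomorphism. Then the finitely induced representation ind_H^G(ρ) is irreducible. -/
/-- The natural map `End_H(ρ) → End_G(ind_H^G ρ)` lands in `G`-equivariant
endomorphisms. -/
theorem endInd_comm {K : Type} [Field K] {G : Type} [Group G] {V : Type} [AddCommGroup V]
    [Module K V] (H : Subgroup G) (ρ : Representation K H V) (φ : V →ₗ[K] V)
    (hφ : ∀ (h : H) (v : V), φ (ρ h v) = ρ h (φ v)) (x : G) (f : Ind H ρ) :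
    endInd H ρ φ hφ (indRep H ρ x f) = indRep H ρ x (endInd H ρ φ hφ f) := rfl


section Proof9

open scoped Classical

variable {K : Type} [Field K] {G : Type} [Group G] {V : Type} [AddCommGroup V] [Module K V]

theorem ind_ext {H : Subgroup G} {ρ : Representation K H V} {f₁ f₂ : Ind H ρ}
    (h : ∀ g, (f₁ : G → V) g = (f₂ : G → V) g) : f₁ = f₂ :=
  Subtype.ext (funext h)

theorem ind_ne_zero {H : Subgroup G} {ρ : Representation K H V} {f : Ind H ρ}
    (h : f ≠ 0) : ∃ x, (f : G → V) x ≠ 0 := by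
  by_contra hc
  push_neg at hc
  exact h (ind_ext fun g => hc g)

theorem indRep_apply {H : Subgroup G} {ρ : Representation K H V} (x : G) (f : Ind H ρ) (g : G) :
    (indRep H ρ x f : G → V) g = (f : G → V) (g * x) := rfl

/-- Evaluation at a point, as a linear map. -/
def evalAt {H : Subgroup G} (ρ : Representation K H V) (x : G) : Ind H ρ →ₗ[K] V where
  toFun f := (f : G → V) x
  map_add' := fun f₁ f₂ => rfl
  map_smul' := fun c f => rfl

/-- The delta function supported on the coset `H`, with value `v` at `1`. -/
noncomputable def delta (H : Subgroup G) (ρ : Representation K H V) (v : V) : Ind H ρ :=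
  ⟨fun g => if hg : g ∈ H then ρ ⟨g, hg⟩ v else 0, by
    refine ⟨fun h g => ?_, ⟨{1}, fun g hg => ?_⟩⟩
    · dsimp only
      by_cases hgH : g ∈ H
      · have h1 : (h : G) * g ∈ H := H.mul_mem h.2 hgH
        rw [dif_pos hgH, dif_pos h1]
        have : (⟨(h : G) * g, h1⟩ : H) = h * ⟨g, hgH⟩ := rfl
        rw [this, map_mul]
        rfl
      · have h1 : (h : G) * g ∉ H := fun hm => hgH (by
          have := H.mul_mem (H.inv_mem h.2) hm
          simpa [← mul_assoc] using this)
        rw [dif_neg hgH, dif_neg h1, map_zero]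
    · dsimp only at hg
      by_cases hgH : g ∈ H
      · exact ⟨1, Finset.mem_singleton_self 1, g, hgH, (mul_one g).symm⟩
      · exact absurd (dif_neg hgH) hg⟩

theorem delta_apply_mem (H : Subgroup G) (ρ : Representation K H V) (v : V) {g : G}
    (hg : g ∈ H) : (delta H ρ v : G → V) g = ρ ⟨g, hg⟩ v := dif_pos hg

theorem delta_apply_notMem (H : Subgroup G) (ρ : Representation K H V) (v : V) {g : G}
    (hg : g ∉ H) : (delta H ρ v : G → V) g = 0 := dif_neg hg

theorem delta_apply_one (H : Subgroup G) (ρ : Representation K H V) (v : V) :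
    (delta H ρ v : G → V) 1 = v := by
  rw [delta_apply_mem H ρ v H.one_mem]
  have : (⟨(1 : G), H.one_mem⟩ : H) = 1 := rfl
  rw [this, map_one]
  rfl

/-- `delta` as a linear map. -/
noncomputable def deltaL (H : Subgroup G) (ρ : Representation K H V) : V →ₗ[K] Ind H ρ where
  toFun := delta H ρ
  map_add' := fun v w => by
    refine ind_ext fun g => ?_
    by_cases hg : g ∈ H
    · show _ = (delta H ρ v : G → V) g + (delta H ρ w : G → V) g
      rw [delta_apply_mem H ρ _ hg, delta_apply_mem H ρ _ hg, delta_apply_mem H ρ _ hg,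
        map_add]
    · show _ = (delta H ρ v : G → V) g + (delta H ρ w : G → V) g
      rw [delta_apply_notMem H ρ _ hg, delta_apply_notMem H ρ _ hg,
        delta_apply_notMem H ρ _ hg, add_zero]
  map_smul' := fun c v => by
    refine ind_ext fun g => ?_
    by_cases hg : g ∈ H
    · show _ = c • (delta H ρ v : G → V) g
      rw [delta_apply_mem H ρ _ hg, delta_apply_mem H ρ _ hg, map_smul]
    · show _ = c • (delta H ρ v : G → V) g
      rw [delta_apply_notMem H ρ _ hg, delta_apply_notMem H ρ _ hg, smul_zero]

theorem delta_rho (H : Subgroup G) (ρ : Representation K H V) (h : H) (v : V) :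
    delta H ρ (ρ h v) = indRep H ρ (h : G) (delta H ρ v) := by
  refine ind_ext fun g => ?_
  rw [indRep_apply]
  by_cases hg : g ∈ H
  · have hgh : g * (h : G) ∈ H := H.mul_mem hg h.2
    rw [delta_apply_mem H ρ _ hg, delta_apply_mem H ρ _ hgh]
    have : (⟨g * (h : G), hgh⟩ : H) = ⟨g, hg⟩ * h := rfl
    rw [this, map_mul]
    rfl
  · have hgh : g * (h : G) ∉ H := fun hm => hg (by
      have := H.mul_mem hm (H.inv_mem h.2)
      simpa [mul_assoc] using this)
    rw [delta_apply_notMem H ρ _ hg, delta_apply_notMem H ρ _ hgh]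

/-- From surjectivity of `End_H(ρ) → End_G(ind ρ)` we deduce that there are no
nonzero `H`-maps `ρ → ρ^g` for `g ∉ H`. -/
theorem psi_zero (H : Subgroup G) [hn : H.Normal] (ρ : Representation K H V)
    (hsurj : ∀ Φ : {Φ : Ind H ρ →ₗ[K] Ind H ρ // ∀ (x : G) (f : Ind H ρ),
          Φ (indRep H ρ x f) = indRep H ρ x (Φ f)},
      ∃ φ : {φ : V →ₗ[K] V // ∀ (h : H) (v : V), φ (ρ h v) = ρ h (φ v)},
        (endInd H ρ φ.1 φ.2 : Ind H ρ →ₗ[K] Ind H ρ) = Φ.1)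
    (g : G) (hg : g ∉ H) (ψ : V →ₗ[K] V)
    (hψ : ∀ (h : H) (v : V), ψ (ρ h v) = ρ ⟨g * h * g⁻¹, hn.conj_mem h h.2 g⟩ (ψ v)) :
    ψ = 0 := by
  -- the intertwiner translated by g
  have memInd : ∀ f : Ind H ρ, (fun x => ψ ((f : G → V) (g⁻¹ * x))) ∈ Ind H ρ := by
    intro f
    constructor
    · intro h x
      have key : g⁻¹ * ((h : G) * x) = (g⁻¹ * h * g) * (g⁻¹ * x) := by group
      have hmem : g⁻¹ * (h : G) * g ∈ H := by
        have := hn.conj_mem h h.2 g⁻¹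
        simpa using this
      dsimp only
      rw [key]
      have := f.2.1 ⟨g⁻¹ * (h : G) * g, hmem⟩ (g⁻¹ * x)
      rw [this, hψ ⟨g⁻¹ * (h : G) * g, hmem⟩]
      congr 1
      · apply congrArg
        apply Subtype.ext
        show g * (g⁻¹ * (h : G) * g) * g⁻¹ = (h : G)
        group
    · obtain ⟨T, hT⟩ := f.2.2
      refine ⟨T.image (g * ·), fun x hx => ?_⟩
      dsimp only at hx
      have h0 : (f : G → V) (g⁻¹ * x) ≠ 0 := fun hz => hx (by rw [hz, map_zero])
      obtain ⟨t, ht, h, hh, hx'⟩ := hT _ h0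
      refine ⟨g * t, Finset.mem_image_of_mem _ ht, g * h * g⁻¹, hn.conj_mem h hh g, ?_⟩
      have : x = g * (g⁻¹ * x) := by group
      rw [this, hx']
      group
  set Φ : Ind H ρ →ₗ[K] Ind H ρ :=
    { toFun := fun f => ⟨fun x => ψ ((f : G → V) (g⁻¹ * x)), memInd f⟩
      map_add' := fun f₁ f₂ => ind_ext fun x => by
        show ψ ((f₁ : G → V) _ + (f₂ : G → V) _) = _
        rw [map_add]; rfl
      map_smul' := fun c f => ind_ext fun x => by
        show ψ (c • (f : G → V) _) = _
        rw [map_smul]; rfl } with hΦdef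
  have hΦcomm : ∀ (x : G) (f : Ind H ρ), Φ (indRep H ρ x f) = indRep H ρ x (Φ f) := by
    intro x f
    refine ind_ext fun y => ?_
    show ψ ((f : G → V) (g⁻¹ * y * x)) = ψ ((f : G → V) (g⁻¹ * (y * x)))
    rw [mul_assoc]
  obtain ⟨φ, hφ⟩ := hsurj ⟨Φ, hΦcomm⟩
  ext v
  have := congrArg (fun Ψ : Ind H ρ →ₗ[K] Ind H ρ => (Ψ (delta H ρ v) : G → V) g) hφ
  dsimp only at this
  have hL : (endInd H ρ φ.1 φ.2 (delta H ρ v) : G → V) g = 0 := by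
    show φ.1 ((delta H ρ v : G → V) g) = 0
    rw [delta_apply_notMem H ρ v hg, map_zero]
  have hR : (Φ (delta H ρ v) : G → V) g = ψ v := by
    show ψ ((delta H ρ v : G → V) (g⁻¹ * g)) = ψ v
    rw [inv_mul_cancel, delta_apply_one]
  rw [hL, hR] at this
  exact this.symm

/-- A `G`-stable submodule containing all delta functions is everything. -/
theorem mem_of_delta (H : Subgroup G) (ρ : Representation K H V)
    (p : Submodule K (Ind H ρ))
    (hstab : ∀ x : G, ∀ w ∈ p, indRep H ρ x w ∈ p)
    (hdelta : ∀ v : V, delta H ρ v ∈ p) (f : Ind H ρ) : f ∈ p := by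
  suffices h : ∀ (n : ℕ) (f : Ind H ρ) (T : Finset G), T.card ≤ n →
      (∀ x, (f : G → V) x ≠ 0 → ∃ t ∈ T, ∃ h ∈ H, x = h * t) → f ∈ p by
    obtain ⟨h1, T, hT⟩ := f.2
    exact h T.card f T le_rfl hT
  intro n
  induction n with
  | zero =>
    intro f T hcard hT
    have hT0 : T = ∅ := Finset.card_eq_zero.mp (Nat.le_zero.mp hcard)
    have : f = 0 := by
      refine ind_ext fun x => ?_
      by_contra hx
      obtain ⟨t, ht, -⟩ := hT x hx
      rw [hT0] at ht
      exact absurd ht (Finset.notMem_empty t)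
    rw [this]; exact p.zero_mem
  | succ n ih =>
    intro f T hcard hT
    by_cases h0 : f = 0
    · rw [h0]; exact p.zero_mem
    obtain ⟨x₀, hx₀⟩ := ind_ne_zero h0
    obtain ⟨t, ht, h, hh, hx'⟩ := hT x₀ hx₀
    have hft : (f : G → V) t ≠ 0 := by
      intro hz
      apply hx₀
      rw [hx', f.2.1 ⟨h, hh⟩ t, hz, map_zero]
    set d : Ind H ρ := indRep H ρ t⁻¹ (delta H ρ ((f : G → V) t)) with hd
    -- f - d vanishes on the coset H t
    have hvanish : ∀ h' : H, ((f - d : Ind H ρ) : G → V) ((h' : G) * t) = 0 := by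
      intro h'
      show (f : G → V) ((h' : G) * t) - (delta H ρ ((f : G → V) t) : G → V)
        ((h' : G) * t * t⁻¹) = 0
      have : (h' : G) * t * t⁻¹ = (h' : G) := by group
      rw [this, delta_apply_mem H ρ _ h'.2, f.2.1 h' t, sub_self]
    have hwit : ∀ x, ((f - d : Ind H ρ) : G → V) x ≠ 0 →
        ∃ t' ∈ T.erase t, ∃ h' ∈ H, x = h' * t' := by
      intro x hx
      have hnot : ¬ ∃ h' ∈ H, x = h' * t := by
        rintro ⟨h', hh', rfl⟩
        exact hx (hvanish ⟨h', hh'⟩)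
      have hdx : (d : G → V) x = 0 := by
        show (delta H ρ ((f : G → V) t) : G → V) (x * t⁻¹) = 0
        refine delta_apply_notMem H ρ _ fun hm => hnot ⟨x * t⁻¹, hm, by group⟩
      have hfx : (f : G → V) x ≠ 0 := by
        intro hz
        apply hx
        show (f : G → V) x - (d : G → V) x = 0
        rw [hz, hdx, sub_self]
      obtain ⟨t', ht', h', hh', hxe⟩ := hT x hfx
      refine ⟨t', Finset.mem_erase.mpr ⟨?_, ht'⟩, h', hh', hxe⟩
      rintro rfl
      exact hnot ⟨h', hh', hxe⟩
    have hcard' : (T.erase t).card ≤ n := by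
      have := Finset.card_erase_of_mem ht
      omega
    have hfd : (f - d : Ind H ρ) ∈ p := ih (f - d) (T.erase t) hcard' hwit
    have hdp : d ∈ p := hstab t⁻¹ _ (hdelta _)
    have : f = (f - d) + d := by abel
    rw [this]
    exact p.add_mem hfd hdp

end Proof9

set_option synthInstance.maxHeartbeats 1000000 in
set_option maxHeartbeats 2000000 in
/-- Let `H` be a normal subgroup of `G` and `ρ` an irreducible
representation of `H`. If the natural ring homomorphism
`End_H(ρ) → End_G(ind_H^G ρ)` is an isomorphism, then `ind_H^G ρ` is irreducible. -/
theorem stmt9 {K : Type} [Field K] {G : Type} [Group G] {V : Type} [AddCommGroup V]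
    [Module K V] (H : Subgroup G) [H.Normal] (ρ : Representation K H V)
    (hirr : IsIrredRep ρ)
    (hiso : Function.Bijective
      (fun φ : {φ : V →ₗ[K] V // ∀ (h : H) (v : V), φ (ρ h v) = ρ h (φ v)} =>
        (⟨endInd H ρ φ.1 φ.2, endInd_comm H ρ φ.1 φ.2⟩ :
          {Φ : Ind H ρ →ₗ[K] Ind H ρ // ∀ (x : G) (f : Ind H ρ),
            Φ (indRep H ρ x f) = indRep H ρ x (Φ f)}))) :
    IsIrredRep (indRep H ρ) := by
  classical
  obtain ⟨v₀, hv₀⟩ := hirr.1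
  constructor
  · refine ⟨delta H ρ v₀, fun h => hv₀ ?_⟩
    have := congrArg (fun f : Ind H ρ => (f : G → V) 1) h
    rw [delta_apply_one] at this
    exact this
  · intro p hp
    by_cases hbot : p = ⊥
    · exact Or.inl hbot
    right
    have hsurj : ∀ Φ : {Φ : Ind H ρ →ₗ[K] Ind H ρ // ∀ (x : G) (f : Ind H ρ),
          Φ (indRep H ρ x f) = indRep H ρ x (Φ f)},
        ∃ φ : {φ : V →ₗ[K] V // ∀ (h : H) (v : V), φ (ρ h v) = ρ h (φ v)},
          (endInd H ρ φ.1 φ.2 : Ind H ρ →ₗ[K] Ind H ρ) = Φ.1 := by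
      intro Φ
      obtain ⟨φ, hφ⟩ := hiso.2 Φ
      exact ⟨φ, congrArg Subtype.val hφ⟩
    obtain ⟨f₀, hf₀p, hf₀⟩ := (Submodule.ne_bot_iff p).mp hbot
    -- minimal support size among nonzero elements of p
    have hQ : ∃ n : ℕ, ∃ u : Ind H ρ, u ∈ p ∧ u ≠ 0 ∧ ∃ S : Finset G,
        (∀ x, (u : G → V) x ≠ 0 → ∃ t ∈ S, ∃ h ∈ H, x = h * t) ∧ S.card ≤ n := by
      obtain ⟨S, hS⟩ := f₀.2.2
      exact ⟨S.card, f₀, hf₀p, hf₀, S, hS, le_rfl⟩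
    set n₀ := Nat.find hQ with hn₀
    obtain ⟨f, hfp, hf0, T, hWT, hcard⟩ := Nat.find_spec hQ
    have hmin : ∀ u : Ind H ρ, u ∈ p → u ≠ 0 →
        ∀ S : Finset G, (∀ x, (u : G → V) x ≠ 0 → ∃ t ∈ S, ∃ h ∈ H, x = h * t) →
        n₀ ≤ S.card := by
      intro u hup hu0 S hWS
      by_contra hlt
      push_neg at hlt
      exact Nat.find_min hQ hlt ⟨u, hup, hu0, S, hWS, le_rfl⟩
    -- translate so that the value at 1 is nonzero
    obtain ⟨x₀, hx₀⟩ := ind_ne_zero hf0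
    set f₁ : Ind H ρ := indRep H ρ x₀ f with hf₁def
    have hf₁p : f₁ ∈ p := hp x₀ f hfp
    have hf₁1 : (f₁ : G → V) 1 ≠ 0 := by
      rw [hf₁def, indRep_apply, one_mul]
      exact hx₀
    set T₁ : Finset G := T.image (· * x₀⁻¹) with hT₁def
    have hWT₁ : ∀ x, (f₁ : G → V) x ≠ 0 → ∃ t ∈ T₁, ∃ h ∈ H, x = h * t := by
      intro x hx
      rw [hf₁def, indRep_apply] at hx
      obtain ⟨t, ht, h, hh, hxe⟩ := hWT (x * x₀) hx
      refine ⟨t * x₀⁻¹, Finset.mem_image_of_mem _ ht, h, hh, ?_⟩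
      have : x = x * x₀ * x₀⁻¹ := by group
      rw [this, hxe, mul_assoc]
    have hcard₁ : T₁.card ≤ n₀ := le_trans (Finset.card_image_le) hcard
    -- T₁ contains an element of H
    obtain ⟨t₀, ht₀T, h₀, hh₀, ht₀e⟩ := hWT₁ 1 hf₁1
    have ht₀H : t₀ ∈ H := by
      have : t₀ = h₀⁻¹ := eq_inv_of_mul_eq_one_right ht₀e.symm
      rw [this]
      exact H.inv_mem hh₀
    -- the submodule of elements of p supported in the cosets of T₁
    set q : Submodule K (Ind H ρ) :=
      { carrier := {u : Ind H ρ | u ∈ p ∧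
          ∀ x, (u : G → V) x ≠ 0 → ∃ t ∈ T₁, ∃ h ∈ H, x = h * t}
        zero_mem' := ⟨p.zero_mem, fun x hx => absurd rfl hx⟩
        add_mem' := by
          rintro u w ⟨hu, hus⟩ ⟨hw, hws⟩
          refine ⟨p.add_mem hu hw, fun x hx => ?_⟩
          by_cases h1 : (u : G → V) x ≠ 0
          · exact hus x h1
          · push_neg at h1
            refine hws x fun h2 => hx ?_
            show (u : G → V) x + (w : G → V) x = 0
            rw [h1, h2, add_zero]
        smul_mem' := by
          rintro c u ⟨hu, hus⟩
          refine ⟨p.smul_mem c hu, fun x hx => hus x fun h1 => hx ?_⟩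
          show c • (u : G → V) x = 0
          rw [h1, smul_zero] } with hqdef
    have hf₁q : f₁ ∈ q := ⟨hf₁p, hWT₁⟩
    -- q is H-stable
    have hqstab : ∀ (h : H) (u : Ind H ρ), u ∈ q → indRep H ρ (h : G) u ∈ q := by
      rintro h u ⟨hup, hus⟩
      refine ⟨hp (h : G) u hup, fun x hx => ?_⟩
      rw [indRep_apply] at hx
      obtain ⟨t, ht, h', hh', hxe⟩ := hus (x * (h : G)) hx
      refine ⟨t, ht, h' * (t * (h : G)⁻¹ * t⁻¹), H.mul_mem hh'
        (‹H.Normal›.conj_mem _ (H.inv_mem h.2) t), ?_⟩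
      have : x = x * (h : G) * (h : G)⁻¹ := by group
      rw [this, hxe]
      group
    -- evaluation at 1 on q
    set e₁ : q →ₗ[K] V := (evalAt ρ 1).comp q.subtype with he₁def
    have he₁app : ∀ u : q, e₁ u = ((u : Ind H ρ) : G → V) 1 := fun u => rfl
    have hinj0 : ∀ u : q, e₁ u = 0 → (u : Ind H ρ) = 0 := by
      intro u hu
      by_contra hne
      obtain ⟨hup, hus⟩ := u.2
      have hvan : ∀ x, x ∈ H → ((u : Ind H ρ) : G → V) x = 0 := by
        intro x hx
        have heq := (u : Ind H ρ).2.1 ⟨x, hx⟩ 1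
        rw [mul_one] at heq
        rw [heq]
        have h1 : ((u : Ind H ρ) : G → V) 1 = 0 := hu
        rw [h1, map_zero]
      set S : Finset G := T₁.filter (· ∉ H) with hSdef
      have hWS : ∀ x, ((u : Ind H ρ) : G → V) x ≠ 0 → ∃ t ∈ S, ∃ h ∈ H, x = h * t := by
        intro x hx
        obtain ⟨t, ht, h, hh, hxe⟩ := hus x hx
        refine ⟨t, Finset.mem_filter.mpr ⟨ht, fun htH => ?_⟩, h, hh, hxe⟩
        exact hx (hvan x (hxe ▸ H.mul_mem hh htH))
      have hSlt : S.card < T₁.card := by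
        refine Finset.card_lt_card ⟨Finset.filter_subset _ _, fun hsub => ?_⟩
        have := Finset.mem_filter.mp (hsub ht₀T)
        exact this.2 ht₀H
      have := hmin (u : Ind H ρ) hup hne S hWS
      omega
    have hinj : Function.Injective e₁ := by
      intro a b hab
      have h1 : e₁ (a - b) = 0 := by rw [map_sub e₁ a b, hab, sub_self]
      have h2 := hinj0 (a - b) h1
      have : (a : Ind H ρ) = (b : Ind H ρ) := by
        have := sub_eq_zero.mp h2
        exact_mod_cast this
      exact Subtype.ext this
    have hrstab : ∀ (h : H), ∀ w ∈ LinearMap.range e₁, ρ h w ∈ LinearMap.range e₁ := by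
      intro h w hw
      obtain ⟨u, rfl⟩ := hw
      refine ⟨⟨indRep H ρ (h : G) (u : Ind H ρ), hqstab h (u : Ind H ρ) u.2⟩, ?_⟩
      rw [he₁app, he₁app]
      show ((u : Ind H ρ) : G → V) (1 * (h : G)) = ρ h (((u : Ind H ρ) : G → V) 1)
      have heq := (u : Ind H ρ).2.1 h 1
      rw [mul_one] at heq
      rw [one_mul, heq]
    have hsurjE : Function.Surjective e₁ := by
      rw [← LinearMap.range_eq_top]
      rcases hirr.2 (LinearMap.range e₁) hrstab with hr | hr
      · exfalso
        have : e₁ ⟨f₁, hf₁q⟩ ∈ LinearMap.range e₁ := ⟨_, rfl⟩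
        rw [hr, Submodule.mem_bot] at this
        exact hf₁1 this
      · exact hr
    set E := LinearEquiv.ofBijective e₁ ⟨hinj, hsurjE⟩ with hEdef
    have hEapp : ∀ u : q, E u = ((u : Ind H ρ) : G → V) 1 := fun u => rfl
    -- f₁ vanishes outside H
    have hvanout : ∀ x, x ∉ H → (f₁ : G → V) x = 0 := by
      intro x hx
      set ψ : V →ₗ[K] V := ((evalAt ρ x).comp q.subtype).comp E.symm.toLinearMap
        with hψdef
      have hψapp : ∀ v : V, ψ v = ((E.symm v : Ind H ρ) : G → V) x := fun v => rfl
      have hψ : ∀ (h : H) (v : V),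
          ψ (ρ h v) = ρ ⟨x * h * x⁻¹, ‹H.Normal›.conj_mem h h.2 x⟩ (ψ v) := by
        intro h v
        set u : q := E.symm v with hu
        have hsymm : E.symm (ρ h v) =
            ⟨indRep H ρ (h : G) (u : Ind H ρ), hqstab h (u : Ind H ρ) u.2⟩ := by
          rw [LinearEquiv.symm_apply_eq, hEapp]
          show ρ h v = ((u : Ind H ρ) : G → V) (1 * (h : G))
          have heq := (u : Ind H ρ).2.1 h 1
          rw [mul_one] at heq
          rw [one_mul, heq]
          have hv : ((u : Ind H ρ) : G → V) 1 = v := by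
            rw [← hEapp u, hu, E.apply_symm_apply]
          rw [hv]
        rw [hψapp, hsymm]
        show ((u : Ind H ρ) : G → V) (x * (h : G)) = _
        have hkey : x * (h : G) = (x * (h : G) * x⁻¹) * x := by group
        conv_lhs => rw [hkey]
        have heq := (u : Ind H ρ).2.1 ⟨x * (h : G) * x⁻¹, ‹H.Normal›.conj_mem h h.2 x⟩ x
        rw [heq, hψapp, hu]
      have hz := psi_zero H ρ hsurj x hx ψ hψ
      have hsf : E.symm ((f₁ : G → V) 1) = ⟨f₁, hf₁q⟩ := by
        rw [LinearEquiv.symm_apply_eq, hEapp]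
      have : ψ ((f₁ : G → V) 1) = (f₁ : G → V) x := by
        rw [hψapp, hsf]
      rw [hz] at this
      exact this.symm.trans rfl
    have hfd : f₁ = delta H ρ ((f₁ : G → V) 1) := by
      refine ind_ext fun x => ?_
      by_cases hx : x ∈ H
      · rw [delta_apply_mem H ρ _ hx]
        have heq := f₁.2.1 ⟨x, hx⟩ 1
        rw [mul_one] at heq
        exact heq
      · rw [delta_apply_notMem H ρ _ hx]
        exact hvanout x hx
    -- the submodule of values whose delta lies in p
    have hNstab : ∀ (h : H), ∀ w ∈ p.comap (deltaL H ρ), ρ h w ∈ p.comap (deltaL H ρ) := by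
      intro h w hw
      rw [Submodule.mem_comap] at hw ⊢
      show delta H ρ (ρ h w) ∈ p
      rw [delta_rho]
      exact hp (h : G) _ hw
    have hNtop : p.comap (deltaL H ρ) = ⊤ := by
      rcases hirr.2 (p.comap (deltaL H ρ)) hNstab with hr | hr
      · exfalso
        have hmem : (f₁ : G → V) 1 ∈ p.comap (deltaL H ρ) := by
          rw [Submodule.mem_comap]
          show delta H ρ ((f₁ : G → V) 1) ∈ p
          rw [← hfd]
          exact hf₁p
        rw [hr, Submodule.mem_bot] at hmem
        exact hf₁1 hmem
      · exact hr
    have hdel : ∀ v : V, delta H ρ v ∈ p := by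
      intro v
      have : v ∈ p.comap (deltaL H ρ) := by rw [hNtop]; trivial
      exact Submodule.mem_comap.mp this
    exact Submodule.eq_top_iff'.mpr fun u => mem_of_delta H ρ p hp hdel u
end

section
/- Let H be a normal subgroup of a group G and χ: H → K* a character such that ind_H^G(χ) is Schur irreducible (End_G(ind_H^G(χ)) = K). Then ind_H^G(χ) is an irreducible representation of G. -/
namespace Stmt10

variable {K : Type} [Field K] {G : Type} [Group G]
variable (H : Subgroup G) [hN : H.Normal] (χ : H →* Kˣ)

@[simp] lemma charRep_apply (h : H) (v : K) : charRep χ h v = (χ h : K) * v := rfl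

lemma chi_mul (a b : G) (ha : a ∈ H) (hb : b ∈ H) :
    (χ ⟨a * b, mul_mem ha hb⟩ : K) = χ ⟨a, ha⟩ * χ ⟨b, hb⟩ := by
  rw [show (⟨a * b, mul_mem ha hb⟩ : H) = ⟨a, ha⟩ * ⟨b, hb⟩ from rfl, map_mul, Units.val_mul]

@[simp] lemma indRep_apply (x : G) (f : Ind H (charRep χ)) (g : G) :
    (indRep H (charRep χ) x f).1 g = f.1 (g * x) := rfl

lemma ind_mem1 (f : Ind H (charRep χ)) (h : H) (g : G) :
    f.1 (↑h * g) = (χ h : K) * f.1 g := by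
  rw [f.2.1 h g, charRep_apply]

lemma ind_coset (f : Ind H (charRep χ)) (g t : G) (hgt : g * t⁻¹ ∈ H) :
    f.1 g = (χ ⟨g * t⁻¹, hgt⟩ : K) * f.1 t := by
  have := ind_mem1 H χ f ⟨g * t⁻¹, hgt⟩ t
  simpa [inv_mul_cancel_right] using this

lemma ind_vanish (f : Ind H (charRep χ)) (g t : G) (hgt : g * t⁻¹ ∈ H)
    (h0 : f.1 t = 0) : f.1 g = 0 := by
  rw [ind_coset H χ f g t hgt, h0, mul_zero]

set_option linter.unusedSectionVars false
open scoped Classical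

/-- The delta function supported on the coset `H * t`. -/
noncomputable def delta (t : G) : Ind H (charRep χ) :=
  ⟨fun g => if hgt : g * t⁻¹ ∈ H then (χ ⟨g * t⁻¹, hgt⟩ : K) else 0, by
    constructor
    · intro h g
      have hmem : (↑h * g) * t⁻¹ = ↑h * (g * t⁻¹) := by group
      rw [charRep_apply]
      beta_reduce
      by_cases hgt : g * t⁻¹ ∈ H
      · have h2 : (↑h * g) * t⁻¹ ∈ H := by rw [hmem]; exact mul_mem h.2 hgt
        rw [dif_pos hgt, dif_pos h2]
        have : (χ ⟨↑h * g * t⁻¹, h2⟩ : K) = χ ⟨↑h * (g * t⁻¹), mul_mem h.2 hgt⟩ :=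
          congrArg (fun u => (χ u : K)) (Subtype.ext hmem)
        rw [this, chi_mul H χ _ _ h.2 hgt]
      · have h2 : ¬ ((↑h * g) * t⁻¹ ∈ H) := by
          rw [hmem]; intro hc
          exact hgt (by simpa using mul_mem (inv_mem h.2) hc)
        rw [dif_neg hgt, dif_neg h2, mul_zero]
    · refine ⟨{t}, fun g hg => ?_⟩
      by_cases hgt : g * t⁻¹ ∈ H
      · exact ⟨t, Finset.mem_singleton_self t, g * t⁻¹, hgt, by group⟩
      · exact absurd (dif_neg hgt) hg⟩

lemma delta_apply (t g : G) :
    (delta H χ t).1 g = if hgt : g * t⁻¹ ∈ H then (χ ⟨g * t⁻¹, hgt⟩ : K) else 0 := rfl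

lemma delta_self (t : G) : (delta H χ t).1 t = 1 := by
  have h1 : t * t⁻¹ ∈ H := by rw [mul_inv_cancel]; exact one_mem H
  rw [delta_apply, dif_pos h1]
  have : (⟨t * t⁻¹, h1⟩ : H) = 1 := by ext; simp
  rw [this, map_one, Units.val_one]

lemma delta_ne_zero (t : G) : delta H χ t ≠ 0 := by
  intro h
  have h2 := delta_self H χ t
  rw [h] at h2
  exact one_ne_zero (h2.symm.trans rfl)

/-- G translates delta functions to delta functions. -/
lemma indRep_delta (x t : G) :
    indRep H (charRep χ) x (delta H χ t) = delta H χ (t * x⁻¹) := by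
  ext g
  show (delta H χ t).1 (g * x) = (delta H χ (t * x⁻¹)).1 g
  rw [delta_apply, delta_apply]
  have he : g * (t * x⁻¹)⁻¹ = g * x * t⁻¹ := by group
  rw [he]

/-- A function supported on a single coset is a multiple of a delta function. -/
lemma eq_smul_delta (f : Ind H (charRep χ)) (t : G)
    (hsupp : ∀ g, f.1 g ≠ 0 → g * t⁻¹ ∈ H) : f = f.1 t • delta H χ t := by
  ext g
  show f.1 g = f.1 t * (delta H χ t).1 g
  by_cases hgt : g * t⁻¹ ∈ H
  · rw [ind_coset H χ f g t hgt, delta_apply, dif_pos hgt]; ring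
  · rw [delta_apply, dif_neg hgt, mul_zero]
    by_contra h
    exact hgt (hsupp g h)

@[simp] lemma smul_coe (c : K) (f : Ind H (charRep χ)) (g : G) :
    (c • f : Ind H (charRep χ)).1 g = c * f.1 g := rfl

@[simp] lemma sub_coe (f₁ f₂ : Ind H (charRep χ)) (g : G) :
    (f₁ - f₂ : Ind H (charRep χ)).1 g = f₁.1 g - f₂.1 g := rfl

lemma chi_congr {a b : G} (ha : a ∈ H) (hb : b ∈ H) (hab : a = b) :
    (χ ⟨a, ha⟩ : K) = χ ⟨b, hb⟩ := by subst hab; rfl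

/-- The conjugate character value. -/
noncomputable def ccr (t : G) (h : H) : K := χ ⟨t * ↑h * t⁻¹, hN.conj_mem ↑h h.2 t⟩

lemma ccr_def (t : G) (h : H) :
    ccr H χ t h = (χ ⟨t * ↑h * t⁻¹, hN.conj_mem ↑h h.2 t⟩ : K) := rfl

lemma eval_mul_right (f : Ind H (charRep χ)) (t : G) (h : H) :
    f.1 (t * ↑h) = ccr H χ t h * f.1 t := by
  have e : t * ↑h = (↑(⟨t * ↑h * t⁻¹, hN.conj_mem ↑h h.2 t⟩ : H) : G) * t := by
    show t * ↑h = t * ↑h * t⁻¹ * t; group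
  rw [e, ind_mem1 H χ f _ t, ccr_def]

/-- Key use of Schur irreducibility: if conjugation by `x` fixes `χ`, then `x ∈ H`. -/
lemma mem_of_conj_fix
    (hSchur : ∀ Φ : Ind H (charRep χ) →ₗ[K] Ind H (charRep χ),
      (∀ (x : G) (f : Ind H (charRep χ)),
        Φ (indRep H (charRep χ) x f) = indRep H (charRep χ) x (Φ f)) →
      ∃ c : K, Φ = c • LinearMap.id)
    (x : G) (hx : ∀ (u : G) (hu : u ∈ H) (hu' : x * u * x⁻¹ ∈ H),
      (χ ⟨x * u * x⁻¹, hu'⟩ : K) = χ ⟨u, hu⟩) : x ∈ H := by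
  by_contra hxH
  classical
  have memInd : ∀ f : Ind H (charRep χ), (fun g => f.1 (x * g)) ∈ Ind H (charRep χ) := by
    intro f
    constructor
    · intro h g
      beta_reduce
      rw [charRep_apply]
      have hu' : x * ↑h * x⁻¹ ∈ H := hN.conj_mem ↑h h.2 x
      have e : x * (↑h * g) = (↑(⟨x * ↑h * x⁻¹, hu'⟩ : H) : G) * (x * g) := by
        show x * (↑h * g) = x * ↑h * x⁻¹ * (x * g); group
      rw [e, ind_mem1 H χ f _ (x * g)]
      congr 1
      exact hx ↑h h.2 hu'
    · obtain ⟨T, hT⟩ := f.2.2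
      refine ⟨T.image (fun t => x⁻¹ * t), fun g hg => ?_⟩
      obtain ⟨t, ht, h, hh, he⟩ := hT (x * g) hg
      refine ⟨x⁻¹ * t, Finset.mem_image_of_mem _ ht, x⁻¹ * h * x, ?_, ?_⟩
      · have := hN.conj_mem h hh x⁻¹; rwa [inv_inv] at this
      · have : g = x⁻¹ * (h * t) := by rw [← he]; group
        rw [this]; group
  set Φ : Ind H (charRep χ) →ₗ[K] Ind H (charRep χ) :=
    { toFun := fun f => ⟨fun g => f.1 (x * g), memInd f⟩
      map_add' := fun f₁ f₂ => by ext g; rfl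
      map_smul' := fun c f => by ext g; rfl } with hΦ
  have hequiv : ∀ (y : G) (f : Ind H (charRep χ)),
      Φ (indRep H (charRep χ) y f) = indRep H (charRep χ) y (Φ f) := by
    intro y f
    ext g
    show f.1 (x * g * y) = f.1 (x * (g * y))
    rw [mul_assoc]
  obtain ⟨c, hc⟩ := hSchur Φ hequiv
  have happ : ∀ f : Ind H (charRep χ), Φ f = c • f := by
    intro f; rw [hc]; rfl
  have h1 := congrArg (fun f : Ind H (charRep χ) => f.1 1) (happ (delta H χ 1))
  have h2 := congrArg (fun f : Ind H (charRep χ) => f.1 x⁻¹) (happ (delta H χ 1))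
  simp only [smul_coe] at h1 h2
  have e1 : (Φ (delta H χ 1)).1 1 = 0 := by
    show (delta H χ 1).1 (x * 1) = 0
    rw [delta_apply]
    have : ¬ (x * 1 * (1:G)⁻¹ ∈ H) := by simpa using hxH
    rw [dif_neg this]
  have e2 : (Φ (delta H χ 1)).1 x⁻¹ = 1 := by
    show (delta H χ 1).1 (x * x⁻¹) = 1
    have : x * x⁻¹ = (1:G) := mul_inv_cancel x
    rw [this, delta_self]
  rw [e1] at h1
  rw [e2] at h2
  rw [delta_self] at h1
  have hc0 : c = 0 := by rw [mul_one] at h1; exact h1.symm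
  rw [hc0, zero_mul] at h2
  exact one_ne_zero h2

lemma exists_sep
    (hSchur : ∀ Φ : Ind H (charRep χ) →ₗ[K] Ind H (charRep χ),
      (∀ (x : G) (f : Ind H (charRep χ)),
        Φ (indRep H (charRep χ) x f) = indRep H (charRep χ) x (Φ f)) →
      ∃ c : K, Φ = c • LinearMap.id)
    (t₁ t₂ : G) (h12 : t₂ * t₁⁻¹ ∉ H) :
    ∃ h : H, ccr H χ t₁ h ≠ ccr H χ t₂ h := by
  by_contra hall
  push_neg at hall
  refine h12 (mem_of_conj_fix H χ hSchur (t₂ * t₁⁻¹) ?_)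
  intro u hu hu'
  have h' : t₁⁻¹ * u * t₁ ∈ H := by
    have := hN.conj_mem u hu t₁⁻¹; rwa [inv_inv] at this
  have h1 : t₁ * (t₁⁻¹ * u * t₁) * t₁⁻¹ ∈ H := hN.conj_mem _ h' t₁
  have h2 : t₂ * (t₁⁻¹ * u * t₁) * t₂⁻¹ ∈ H := hN.conj_mem _ h' t₂
  have key : (χ ⟨t₁ * (t₁⁻¹ * u * t₁) * t₁⁻¹, h1⟩ : K)
      = χ ⟨t₂ * (t₁⁻¹ * u * t₁) * t₂⁻¹, h2⟩ := hall ⟨t₁⁻¹ * u * t₁, h'⟩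
  have e1 : (χ ⟨t₁ * (t₁⁻¹ * u * t₁) * t₁⁻¹, h1⟩ : K) = χ ⟨u, hu⟩ :=
    chi_congr H χ _ _ (by group)
  have e2 : (χ ⟨t₂ * (t₁⁻¹ * u * t₁) * t₂⁻¹, h2⟩ : K)
      = χ ⟨t₂ * t₁⁻¹ * u * (t₂ * t₁⁻¹)⁻¹, hu'⟩ :=
    chi_congr H χ _ _ (by group)
  rw [← e2, ← key, e1]

lemma exists_delta_mem
    (hsep : ∀ t₁ t₂ : G, t₂ * t₁⁻¹ ∉ H → ∃ h : H, ccr H χ t₁ h ≠ ccr H χ t₂ h)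
    (p : Submodule K (Ind H (charRep χ)))
    (hp : ∀ g : G, ∀ w ∈ p, indRep H (charRep χ) g w ∈ p) :
    ∀ (n : ℕ) (T : Finset G) (f : Ind H (charRep χ)), T.card ≤ n → f ∈ p →
      (∀ g, f.1 g ≠ 0 → ∃ t ∈ T, g * t⁻¹ ∈ H) → f ≠ 0 →
      ∃ t : G, delta H χ t ∈ p := by
  intro n
  induction n with
  | zero =>
    intro T f hcard hfp hsupp hf0
    exfalso
    apply hf0
    ext g
    show f.1 g = 0
    by_contra h
    obtain ⟨t, ht, _⟩ := hsupp g h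
    rw [Finset.card_eq_zero.mp (Nat.le_zero.mp hcard)] at ht
    exact absurd ht (Finset.notMem_empty t)
  | succ n ih =>
    intro T f hcard hfp hsupp hf0
    have hex : ∃ g, f.1 g ≠ 0 := by
      by_contra hall; push_neg at hall
      exact hf0 (Subtype.ext (funext hall))
    obtain ⟨g₀, hg₀⟩ := hex
    obtain ⟨t₁, ht₁T, ht₁⟩ := hsupp g₀ hg₀
    have hft₁ : f.1 t₁ ≠ 0 := fun h0 => hg₀ (ind_vanish H χ f g₀ t₁ ht₁ h0)
    by_cases hone : ∀ g, f.1 g ≠ 0 → g * t₁⁻¹ ∈ H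
    · refine ⟨t₁, ?_⟩
      obtain ⟨a, ha, heq⟩ : ∃ a : K, a ≠ 0 ∧ f = a • delta H χ t₁ :=
        ⟨f.1 t₁, hft₁, eq_smul_delta H χ f t₁ hone⟩
      have hd : delta H χ t₁ = a⁻¹ • f := by
        rw [heq, smul_smul, inv_mul_cancel₀ ha, one_smul]
      rw [hd]
      exact Submodule.smul_mem p _ hfp
    · push_neg at hone
      obtain ⟨g₂, hg₂, hg₂t₁⟩ := hone
      obtain ⟨t₂, ht₂T, ht₂⟩ := hsupp g₂ hg₂
      have hft₂ : f.1 t₂ ≠ 0 := fun h0 => hg₂ (ind_vanish H χ f g₂ t₂ ht₂ h0)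
      have ht₂t₁ : t₂ * t₁⁻¹ ∉ H := by
        intro hc
        apply hg₂t₁
        have hm := mul_mem ht₂ hc
        rwa [show g₂ * t₂⁻¹ * (t₂ * t₁⁻¹) = g₂ * t₁⁻¹ by group] at hm
      obtain ⟨h₀, hsep₀⟩ := hsep t₁ t₂ ht₂t₁
      set c₁ : K := ccr H χ t₁ h₀ with hc₁
      set f' : Ind H (charRep χ) := indRep H (charRep χ) ↑h₀ f - c₁ • f with hf'
      have hf'p : f' ∈ p :=
        Submodule.sub_mem p (hp ↑h₀ f hfp) (Submodule.smul_mem p c₁ hfp)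
      have hf'apply : ∀ g, f'.1 g = f.1 (g * ↑h₀) - c₁ * f.1 g := by
        intro g; rw [hf']; simp
      have hf't₁ : f'.1 t₁ = 0 := by
        rw [hf'apply, eval_mul_right H χ f t₁ h₀, ← hc₁, sub_self]
      have hf't₂ : f'.1 t₂ ≠ 0 := by
        rw [hf'apply, eval_mul_right H χ f t₂ h₀]
        intro hc
        have : (ccr H χ t₂ h₀ - c₁) * f.1 t₂ = 0 := by rw [sub_mul]; linear_combination hc
        rcases mul_eq_zero.mp this with h | h
        · exact hsep₀ (by linear_combination -h)
        · exact hft₂ h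
      have hf'0 : f' ≠ 0 := by
        intro hc; rw [hc] at hf't₂; exact hf't₂ rfl
      set T' : Finset G := T.filter (fun t => t * t₁⁻¹ ∉ H) with hT'
      have hT'ss : T' ⊂ T := by
        refine Finset.ssubset_iff_of_subset (Finset.filter_subset _ _) |>.mpr ?_
        refine ⟨t₁, ht₁T, ?_⟩
        intro hmem
        have := (Finset.mem_filter.mp hmem).2
        exact this (by rw [mul_inv_cancel]; exact one_mem H)
      have hcard' : T'.card ≤ n :=
        Nat.lt_succ_iff.mp (lt_of_lt_of_le (Finset.card_lt_card hT'ss) hcard)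
      have hsupp' : ∀ g, f'.1 g ≠ 0 → ∃ t ∈ T', g * t⁻¹ ∈ H := by
        intro g hg
        have hgnot : g * t₁⁻¹ ∉ H := fun hc => hg (ind_vanish H χ f' g t₁ hc hf't₁)
        have hcases : f.1 (g * ↑h₀) ≠ 0 ∨ f.1 g ≠ 0 := by
          by_contra hcon
          push_neg at hcon
          apply hg
          rw [hf'apply, hcon.1, hcon.2, mul_zero, sub_zero]
        have hget : ∃ t ∈ T, g * t⁻¹ ∈ H := by
          rcases hcases with h | h
          · obtain ⟨t, htT, hgt⟩ := hsupp _ h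
            refine ⟨t, htT, ?_⟩
            have hc2 : t * ↑h₀⁻¹ * t⁻¹ ∈ H := hN.conj_mem _ (inv_mem h₀.2) t
            have := mul_mem hgt hc2
            rwa [show g * ↑h₀ * t⁻¹ * (t * ↑h₀⁻¹ * t⁻¹) = g * t⁻¹ by
              simp only [InvMemClass.coe_inv]; group] at this
          · obtain ⟨t, htT, hgt⟩ := hsupp _ h
            exact ⟨t, htT, hgt⟩
        obtain ⟨t, htT, hgt⟩ := hget
        refine ⟨t, Finset.mem_filter.mpr ⟨htT, ?_⟩, hgt⟩
        intro hc
        apply hgnot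
        have := mul_mem hgt hc
        rwa [show g * t⁻¹ * (t * t₁⁻¹) = g * t₁⁻¹ by group] at this
      exact ih T' f' hcard' hf'p hsupp' hf'0

lemma mem_of_deltas (p : Submodule K (Ind H (charRep χ)))
    (hdelta : ∀ t : G, delta H χ t ∈ p) :
    ∀ (n : ℕ) (T : Finset G) (f : Ind H (charRep χ)), T.card ≤ n →
      (∀ g, f.1 g ≠ 0 → ∃ t ∈ T, g * t⁻¹ ∈ H) → f ∈ p := by
  intro n
  induction n with
  | zero =>
    intro T f hcard hsupp
    have : f = 0 := by
      ext g
      show f.1 g = 0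
      by_contra h
      obtain ⟨t, ht, _⟩ := hsupp g h
      rw [Finset.card_eq_zero.mp (Nat.le_zero.mp hcard)] at ht
      exact absurd ht (Finset.notMem_empty t)
    rw [this]; exact Submodule.zero_mem p
  | succ n ih =>
    intro T f hcard hsupp
    by_cases hex : ∃ g, f.1 g ≠ 0
    · obtain ⟨g₀, hg₀⟩ := hex
      obtain ⟨t₁, ht₁T, ht₁⟩ := hsupp g₀ hg₀
      set f' : Ind H (charRep χ) := f - f.1 t₁ • delta H χ t₁ with hf'
      have hf'apply : ∀ g, f'.1 g = f.1 g - f.1 t₁ * (delta H χ t₁).1 g := by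
        intro g; rw [hf']; simp
      have hf't₁ : f'.1 t₁ = 0 := by
        rw [hf'apply, delta_self, mul_one, sub_self]
      have hsupp' : ∀ g, f'.1 g ≠ 0 → ∃ t ∈ T.filter (fun t => t * t₁⁻¹ ∉ H),
          g * t⁻¹ ∈ H := by
        intro g hg
        have hgnot : g * t₁⁻¹ ∉ H := fun hc => hg (ind_vanish H χ f' g t₁ hc hf't₁)
        have hfg : f.1 g ≠ 0 := by
          intro hc
          apply hg
          rw [hf'apply, hc, delta_apply, dif_neg hgnot, mul_zero, sub_zero]
        obtain ⟨t, htT, hgt⟩ := hsupp g hfg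
        refine ⟨t, Finset.mem_filter.mpr ⟨htT, ?_⟩, hgt⟩
        intro hc
        apply hgnot
        have := mul_mem hgt hc
        rwa [show g * t⁻¹ * (t * t₁⁻¹) = g * t₁⁻¹ by group] at this
      have hT'ss : T.filter (fun t => t * t₁⁻¹ ∉ H) ⊂ T := by
        refine Finset.ssubset_iff_of_subset (Finset.filter_subset _ _) |>.mpr ?_
        refine ⟨t₁, ht₁T, ?_⟩
        intro hmem
        exact (Finset.mem_filter.mp hmem).2 (by rw [mul_inv_cancel]; exact one_mem H)
      have hcard' : (T.filter (fun t => t * t₁⁻¹ ∉ H)).card ≤ n :=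
        Nat.lt_succ_iff.mp (lt_of_lt_of_le (Finset.card_lt_card hT'ss) hcard)
      have hf'p : f' ∈ p := ih _ f' hcard' hsupp'
      have hsum := Submodule.add_mem p hf'p
        (Submodule.smul_mem p (f.1 t₁) (hdelta t₁))
      rwa [hf', sub_add_cancel] at hsum
    · push_neg at hex
      have : f = 0 := Subtype.ext (funext hex)
      rw [this]; exact Submodule.zero_mem p

end Stmt10

/-- Let `H` be a normal subgroup of `G` and `χ : H → K*` a
character such that `ind_H^G χ` is Schur irreducible (every `G`-equivariant
endomorphism is a scalar). Then `ind_H^G χ` is irreducible. -/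
theorem stmt10 {K : Type} [Field K] {G : Type} [Group G]
    (H : Subgroup G) [H.Normal] (χ : H →* Kˣ)
    (hSchur : ∀ Φ : Ind H (charRep χ) →ₗ[K] Ind H (charRep χ),
      (∀ (x : G) (f : Ind H (charRep χ)),
        Φ (indRep H (charRep χ) x f) = indRep H (charRep χ) x (Φ f)) →
      ∃ c : K, Φ = c • LinearMap.id) :
    IsIrredRep (indRep H (charRep χ)) := by
  constructor
  · exact ⟨Stmt10.delta H χ 1, Stmt10.delta_ne_zero H χ 1⟩
  · intro p hp
    rcases eq_or_ne p ⊥ with h | h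
    · exact Or.inl h
    right
    obtain ⟨f, hfp, hf0⟩ := (Submodule.ne_bot_iff p).mp h
    obtain ⟨T, hT⟩ := f.2.2
    have hsupp : ∀ g, f.1 g ≠ 0 → ∃ t ∈ T, g * t⁻¹ ∈ H := by
      intro g hg
      obtain ⟨t, ht, h', hh', he⟩ := hT g hg
      exact ⟨t, ht, by rw [he, mul_inv_cancel_right]; exact hh'⟩
    obtain ⟨t₀, ht₀⟩ := Stmt10.exists_delta_mem H χ
      (Stmt10.exists_sep H χ hSchur) p hp T.card T f le_rfl hfp hsupp hf0
    have hdelta : ∀ s : G, Stmt10.delta H χ s ∈ p := by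
      intro s
      have h2 := hp (s⁻¹ * t₀) _ ht₀
      rwa [Stmt10.indRep_delta, show t₀ * (s⁻¹ * t₀)⁻¹ = s by group] at h2
    rw [Submodule.eq_top_iff']
    intro f'
    obtain ⟨T', hT'⟩ := f'.2.2
    have hsupp' : ∀ g, f'.1 g ≠ 0 → ∃ t ∈ T', g * t⁻¹ ∈ H := by
      intro g hg
      obtain ⟨t, ht, h', hh', he⟩ := hT' g hg
      exact ⟨t, ht, by rw [he, mul_inv_cancel_right]; exact hh'⟩
    exact Stmt10.mem_of_deltas H χ p hdelta T'.card T' f' le_rfl hsupp'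
end

section
/- Let K be a field and c ∈ K* not a root of unity. Let A = K⟨γ^{±1}, t^{±1}⟩/(γt − ctγ) be the quantum torus. Then the A-module M = A/A(γ − t + 1) is irreducible but is not isomorphic to A ⊗_B N for any module N over the subalgebra B generated by γ^p and t (p ≥ 2 prime); consequently the corresponding representation of the integral Heisenberg group is irreducible but not finitely induced from any proper subgroup. -/
/-!
The module `M = A/A(γ - t + 1)` embeds into `K(X)`, with `t` acting by multiplication by `X`
and `γ` by `f(X) ↦ (X - 1) f(cX)`; the class of `1` goes to `1`. Modulo the ideal, every element
of `A` is a combination of the `t^j` and `γ^(-k)`, whose images `X^j` and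
`1 / ∏_{m ≤ k} (c^(-m) X - 1)` are linearly independent since each new denominator brings a new
pole; so the embedding is injective.

Irreducibility: the polynomials lying in a nonzero submodule of `K(X)` form a nonzero ideal that is
stable under `p(X) ↦ p(c⁻¹X)`. As `c` is not a root of unity, its generator is a monomial, so the
submodule contains `1`, which generates `M`.

Non-induction: `K(X)` is one-dimensional over `K(t)`, so for `0 ≠ n ∈ N₀` there are polynomials
with `r(t) n = γ s(t) n ≠ 0`. The left side lies in `N₀` and the right side in `γ N₀`, which
contradicts the directness of `N₀ ⊕ γ N₀ ⊕ ⋯ ⊕ γ^(p-1) N₀` once `p ≥ 2`.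
-/

open Polynomial

theorem mul_zpow_eq_of_mul_eq {G : Type*} [Group G] {u v z : G} (hz : Commute z v)
    (h : u * v = z * (v * u)) (b : ℤ) : u * v ^ b = z ^ b * (v ^ b * u) := by
  have : SemiconjBy u v (z * v) := by rw [SemiconjBy, h, mul_assoc]
  rw [← mul_assoc, ← hz.mul_zpow]
  exact this.zpow_right b

theorem zpow_mul_zpow_eq_of_mul_eq {G : Type*} [Group G] {u v z : G} (hz : ∀ g, Commute z g)
    (h : u * v = z * (v * u)) (a b : ℤ) : u ^ a * v ^ b = z ^ (a * b) * (v ^ b * u ^ a) := by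
  have h' : v * u = z⁻¹ * (u * v) := by rw [h, inv_mul_cancel_left]
  have ha : u ^ a * v = z ^ a * (v * u ^ a) := by
    rw [mul_zpow_eq_of_mul_eq (hz u).inv_left h' a, inv_zpow, mul_inv_cancel_left]
  rw [mul_zpow_eq_of_mul_eq ((hz v).zpow_left a) ha b, ← zpow_mul]

namespace QuantumTorus

variable {K : Type*} [Field K] {c : K}

section Lift

variable {R : Type*} [Ring R] [Algebra K R]

theorem units_monomial_mul_monomial (hc : c ≠ 0) {g x : Rˣ}
    (h : (g : R) * x = algebraMap K R c * (x * g)) (i j k l : ℤ) :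
    (↑(g ^ i) * ↑(x ^ j)) * (↑(g ^ k) * ↑(x ^ l) : R) =
      c ^ (-(j * k)) • (↑(g ^ (i + k)) * ↑(x ^ (j + l)) : R) := by
  set z : Rˣ := Units.map (algebraMap K R : K →* R) (Units.mk0 c hc)
  have hz : ∀ y : Rˣ, Commute z y := fun y => Units.ext (Algebra.commutes c (y : R))
  have hxg : x * g = z⁻¹ * (g * x) := by
    rw [show g * x = z * (x * g) from Units.ext h, inv_mul_cancel_left]
  have key : (g ^ i * x ^ j) * (g ^ k * x ^ l) = z ^ (-(j * k)) * (g ^ (i + k) * x ^ (j + l)) := by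
    have hz' : ∀ (n : ℤ) (y : Rˣ), Commute (z⁻¹ ^ n) y := fun n y => ((hz y).inv_left.zpow_left n)
    rw [mul_assoc, ← mul_assoc (x ^ j), zpow_mul_zpow_eq_of_mul_eq (fun y => (hz y).inv_left) hxg]
    simp only [← mul_assoc]
    rw [← (hz' _ (g ^ i)).eq, inv_zpow', zpow_add, zpow_add]
    group
  simp only [← Units.val_mul]
  rw [key, Units.val_mul, ← map_zpow, Units.coe_map, Units.val_zpow_eq_zpow_val,
    Units.val_mk0, MonoidHom.coe_coe, ← Algebra.smul_def]

variable {A : Type*} [Ring A] [Algebra K A] {γ t : Aˣ} {b : Module.Basis (ℤ × ℤ) K A}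

theorem basis_mul_basis (hc : c ≠ 0) (hrel : (γ : A) * t = algebraMap K A c * (t * γ))
    (hb : ∀ i j : ℤ, b (i, j) = ((γ ^ i : Aˣ) : A) * ((t ^ j : Aˣ) : A)) (i j k l : ℤ) :
    b (i, j) * b (k, l) = c ^ (-(j * k)) • b (i + k, j + l) := by
  simp only [hb]
  exact units_monomial_mul_monomial hc hrel i j k l

noncomputable def lift (hc : c ≠ 0) (hrel : (γ : A) * t = algebraMap K A c * (t * γ))
    (hb : ∀ i j : ℤ, b (i, j) = ((γ ^ i : Aˣ) : A) * ((t ^ j : Aˣ) : A)) (g x : Rˣ)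
    (hgx : (g : R) * x = algebraMap K R c * (x * g)) : A →ₐ[K] R :=
  let f : A →ₗ[K] R := b.constr K fun p => ((g ^ p.1 : Rˣ) : R) * ((x ^ p.2 : Rˣ) : R)
  have hmul : (LinearMap.mul K A).compr₂ f = ((LinearMap.mul K R).comp f).compl₂ f :=
    b.ext fun p => b.ext fun q => by
      simp [f, basis_mul_basis hc hrel hb, units_monomial_mul_monomial hc hgx]
  AlgHom.ofLinearMap f (by rw [show (1 : A) = b (0, 0) by simp [hb], b.constr_basis]; simp)
    fun y z => congr($hmul y z)

theorem lift_basis (hc : c ≠ 0) (hrel : (γ : A) * t = algebraMap K A c * (t * γ))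
    (hb : ∀ i j : ℤ, b (i, j) = ((γ ^ i : Aˣ) : A) * ((t ^ j : Aˣ) : A)) {g x : Rˣ}
    (hgx : (g : R) * x = algebraMap K R c * (x * g)) (i j : ℤ) :
    lift hc hrel hb g x hgx (b (i, j)) = ((g ^ i : Rˣ) : R) * ((x ^ j : Rˣ) : R) :=
  b.constr_basis K _ _

end Lift

section Scale

variable (c) (hc : c ≠ 0)

noncomputable def polyScale : K[X] ≃ₐ[K] K[X] :=
  algEquivOfCompEqX (C c * X) (C c⁻¹ * X) (by simp [← mul_assoc, ← C_mul, hc])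
    (by simp [← mul_assoc, ← C_mul, hc])

theorem polyScale_apply (p : K[X]) : polyScale c hc p = p.comp (C c * X) := by
  simp [polyScale, comp_eq_aeval]

theorem polyScale_symm_apply (p : K[X]) : (polyScale c hc).symm p = p.comp (C c⁻¹ * X) := by
  simp [polyScale, comp_eq_aeval]

noncomputable def scale : RatFunc K ≃ₐ[K] RatFunc K :=
  IsFractionRing.algEquivOfAlgEquiv (polyScale c hc)

theorem scale_algebraMap (p : K[X]) :
    scale c hc (algebraMap K[X] (RatFunc K) p) = algebraMap K[X] (RatFunc K) (polyScale c hc p) :=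
  IsFractionRing.algEquivOfAlgEquiv_algebraMap _ p

theorem scale_symm_algebraMap (p : K[X]) :
    (scale c hc).symm (algebraMap K[X] (RatFunc K) p) =
      algebraMap K[X] (RatFunc K) ((polyScale c hc).symm p) := by
  rw [scale, IsFractionRing.algEquivOfAlgEquiv_symm]
  exact IsFractionRing.algEquivOfAlgEquiv_algebraMap _ p

theorem scale_X : scale c hc RatFunc.X = algebraMap K (RatFunc K) c * RatFunc.X := by
  rw [← RatFunc.algebraMap_X, scale_algebraMap, polyScale_apply, X_comp, map_mul,
    ← Polynomial.algebraMap_eq, ← IsScalarTower.algebraMap_apply]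

end Scale

section Laurent

theorem X_pow_toNat_mul_zpow (j : ℤ) :
    (RatFunc.X : RatFunc K) ^ (-j).toNat * RatFunc.X ^ j =
      algebraMap K[X] (RatFunc K) (X ^ j.toNat) := by
  rw [map_pow, RatFunc.algebraMap_X, ← zpow_natCast, ← zpow_natCast, ← zpow_add₀ RatFunc.X_ne_zero]
  congr 1
  omega

theorem linearIndependent_X_zpow :
    LinearIndependent K fun j : ℤ => (RatFunc.X : RatFunc K) ^ j := by
  rw [linearIndependent_iff']
  intro s g hg j hj
  obtain ⟨M, hM⟩ : ∃ M : ℕ, ∀ i ∈ s, 0 ≤ (M : ℤ) + i :=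
    ⟨s.sup fun i => (-i).toNat, fun i hi => by
      have := Finset.le_sup (f := fun i : ℤ => (-i).toNat) hi
      omega⟩
  have hpoly : ∑ i ∈ s, C (g i) * X ^ (M + i).toNat = (0 : K[X]) := by
    apply IsFractionRing.injective K[X] (RatFunc K)
    rw [map_zero, ← mul_zero ((RatFunc.X : RatFunc K) ^ M), ← hg, Finset.mul_sum, map_sum]
    refine Finset.sum_congr rfl fun i hi => ?_
    rw [map_mul, map_pow, RatFunc.algebraMap_X, RatFunc.algebraMap_C, mul_smul_comm,
      ← zpow_natCast, ← zpow_natCast, ← zpow_add₀ RatFunc.X_ne_zero, Int.toNat_of_nonneg (hM i hi),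
      RatFunc.smul_eq_C_mul]
  have := congr_arg (coeff · (M + j).toNat) hpoly
  simp only [finsetSum_coeff, coeff_C_mul_X_pow, coeff_zero] at this
  have hne : ∀ i ∈ s, i ≠ j → (M + j).toNat ≠ (M + i).toNat := fun i hi hij => by
    have := hM i hi
    have := hM j hj
    omega
  rwa [Finset.sum_eq_single j (fun i hi hij => if_neg (hne i hi hij)) (absurd hj), if_pos rfl]
    at this

variable (K) in
noncomputable def laurent : Submodule K (RatFunc K) :=
  Submodule.span K (Set.range fun j : ℤ => (RatFunc.X : RatFunc K) ^ j)

theorem algebraMap_mul_X_zpow_mem_laurent (q : K[X]) (j : ℤ) :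
    algebraMap K[X] (RatFunc K) q * RatFunc.X ^ j ∈ laurent K := by
  induction q using Polynomial.induction_on' with
  | add p q hp hq => rw [map_add, add_mul]; exact add_mem hp hq
  | monomial n a =>
    have : algebraMap K[X] (RatFunc K) (monomial n a) * RatFunc.X ^ j =
        a • RatFunc.X ^ ((n : ℤ) + j) := by
      rw [← C_mul_X_pow_eq_monomial, map_mul, map_pow, RatFunc.algebraMap_X, RatFunc.algebraMap_C,
        RatFunc.smul_eq_C_mul, zpow_add₀ RatFunc.X_ne_zero, zpow_natCast, mul_assoc]
    exact this ▸ Submodule.smul_mem _ _ (Submodule.subset_span ⟨_, rfl⟩)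

theorem exists_X_pow_mul_eq_algebraMap_of_mem_laurent {f : RatFunc K} (hf : f ∈ laurent K) :
    ∃ (M : ℕ) (q : K[X]), RatFunc.X ^ M * f = algebraMap K[X] (RatFunc K) q := by
  induction hf using Submodule.span_induction with
  | mem f hf => obtain ⟨j, rfl⟩ := hf; exact ⟨_, _, X_pow_toNat_mul_zpow j⟩
  | zero => exact ⟨0, 0, by simp⟩
  | add f g _ _ hf hg =>
    obtain ⟨M, p, hp⟩ := hf
    obtain ⟨N, q, hq⟩ := hg
    refine ⟨M + N, X ^ N * p + X ^ M * q, ?_⟩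
    rw [map_add, map_mul, map_mul, ← hp, ← hq, map_pow, map_pow, RatFunc.algebraMap_X]
    ring
  | smul a f _ hf =>
    obtain ⟨M, p, hp⟩ := hf
    exact ⟨M, C a * p, by rw [map_mul, ← hp, RatFunc.algebraMap_C, RatFunc.smul_eq_C_mul]; ring⟩

theorem C_mul_X_sub_one_ne_zero (a : K) : (C a * X - 1 : K[X]) ≠ 0 := fun h => by
  simpa using congr_arg (eval 0) h

theorem inv_C_mul_X_sub_one_notMem_laurent {a : K} (ha : a ≠ 0) :
    (algebraMap K[X] (RatFunc K) (C a * X - 1))⁻¹ ∉ laurent K := by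
  intro h
  obtain ⟨M, q, hq⟩ := exists_X_pow_mul_eq_algebraMap_of_mem_laurent h
  have hpoly : (X ^ M : K[X]) = (C a * X - 1) * q := by
    apply IsFractionRing.injective K[X] (RatFunc K)
    rw [map_mul, ← hq, map_pow, RatFunc.algebraMap_X, mul_left_comm,
      mul_inv_cancel₀ (RatFunc.algebraMap_ne_zero (C_mul_X_sub_one_ne_zero a)), mul_one]
  simpa [ha] using congr_arg (eval a⁻¹) hpoly

variable (c)

noncomputable def poleDenom (n : ℕ) : K[X] := ∏ m ∈ Finset.range n, (C (c⁻¹ ^ (m + 1)) * X - 1)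

theorem poleDenom_dvd {m n : ℕ} (h : m ≤ n) : poleDenom c m ∣ poleDenom c n :=
  Finset.prod_dvd_prod_of_subset _ _ _ (Finset.range_subset_range.mpr h)

theorem poleDenom_succ (n : ℕ) :
    poleDenom c (n + 1) = poleDenom c n * (C (c⁻¹ ^ (n + 1)) * X - 1) :=
  Finset.prod_range_succ _ _

theorem poleDenom_ne_zero (n : ℕ) : poleDenom c n ≠ 0 :=
  Finset.prod_ne_zero_iff.mpr fun _ _ => C_mul_X_sub_one_ne_zero _

theorem linearIndependent_zpow_sum_poleDenom_inv (hc : c ≠ 0) :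
    LinearIndependent K (Sum.elim (fun j : ℤ => (RatFunc.X : RatFunc K) ^ j)
      fun k : ℕ => (algebraMap K[X] (RatFunc K) (poleDenom c (k + 1)))⁻¹) := by
  set F := Sum.elim (fun j : ℤ => (RatFunc.X : RatFunc K) ^ j)
      fun k : ℕ => (algebraMap K[X] (RatFunc K) (poleDenom c (k + 1)))⁻¹
  set s : ℕ → Set (ℤ ⊕ ℕ) := fun n => Set.range Sum.inl ∪ Sum.inr '' Set.Iio n
  have hF : ∀ n, LinearIndepOn K F (s n) := by
    intro n
    induction n with
    | zero =>
      rw [show s 0 = Set.range Sum.inl by simp [s]]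
      exact (linearIndepOn_range_iff Sum.inl_injective F).mpr linearIndependent_X_zpow
    | succ n ih =>
      have hs : s (n + 1) = insert (Sum.inr n) (s n) := by
        ext (j | k) <;> simp [s, le_iff_eq_or_lt]
      rw [hs]
      refine ih.insert fun hmem => ?_
      -- multiplying by `poleDenom c n` sends the earlier vectors to Laurent polynomials
      have hle : Submodule.span K (F '' s n) ≤ (laurent K).comap
          (LinearMap.mulLeft K (algebraMap K[X] (RatFunc K) (poleDenom c n))) := by
        rw [Submodule.span_le]
        rintro _ ⟨i, ⟨j, rfl⟩ | ⟨k, hk, rfl⟩, rfl⟩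
        · exact algebraMap_mul_X_zpow_mem_laurent _ j
        · obtain ⟨q, hq⟩ := poleDenom_dvd c (show k + 1 ≤ n from hk)
          simpa [F, hq, mul_comm _ (algebraMap K[X] (RatFunc K) q),
            RatFunc.algebraMap_ne_zero (poleDenom_ne_zero c _)]
            using algebraMap_mul_X_zpow_mem_laurent q 0
      refine inv_C_mul_X_sub_one_notMem_laurent (pow_ne_zero (n + 1) (inv_ne_zero hc)) ?_
      have h : algebraMap K[X] (RatFunc K) (poleDenom c n) *
          (algebraMap K[X] (RatFunc K) (poleDenom c (n + 1)))⁻¹ ∈ laurent K := hle hmem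
      rwa [poleDenom_succ, map_mul, mul_inv,
        mul_inv_cancel_left₀ (RatFunc.algebraMap_ne_zero (poleDenom_ne_zero c _))] at h
  have hU : (⋃ n, s n) = Set.univ := by
    refine Set.eq_univ_of_forall fun i => Set.mem_iUnion.mpr ?_
    rcases i with j | k
    · exact ⟨0, Or.inl ⟨j, rfl⟩⟩
    · exact ⟨k + 1, Or.inr ⟨k, Nat.lt_succ_self k, rfl⟩⟩
  have := linearIndepOn_iUnion_of_directed (Monotone.directed_le fun m n h => ?_) hF
  · rwa [hU, linearIndepOn_univ_iff] at this
  · exact Set.union_subset_union_right _ (Set.image_mono (Set.Iio_subset_Iio h))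

end Laurent

section Monomial

theorem pow_injective_of_pow_ne_one {a : K} (ha0 : a ≠ 0) (ha : ∀ n : ℕ, 0 < n → a ^ n ≠ 1) :
    Function.Injective (a ^ · : ℕ → K) := by
  intro m n (h : a ^ m = a ^ n)
  wlog hmn : m ≤ n generalizing m n
  · exact (this h.symm (le_of_not_ge hmn)).symm
  obtain ⟨k, rfl⟩ := Nat.exists_eq_add_of_le hmn
  rw [pow_add, left_eq_mul₀ (pow_ne_zero m ha0)] at h
  by_contra hk
  exact ha k (by omega) h

theorem eq_C_mul_X_pow_of_dvd_comp {a : K} (ha : Function.Injective (a ^ · : ℕ → K)) {p : K[X]}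
    (hp : p ∣ p.comp (C a * X)) : p = C p.leadingCoeff * X ^ p.natDegree := by
  rcases eq_or_ne p 0 with rfl | hp0
  · simp
  have ha0 : a ≠ 0 := by
    rintro rfl
    exact absurd (@ha 1 2 (by simp)) (by decide)
  obtain ⟨w, hw⟩ := hp
  have hcomp0 : p.comp (C a * X) ≠ 0 :=
    (comp_C_mul_X_eq_zero_iff (mem_nonZeroDivisors_of_ne_zero ha0)).not.mpr hp0
  have hw0 : w ≠ 0 := by
    rintro rfl
    exact hcomp0 (by simpa using hw)
  have hdeg : w.natDegree = 0 := by
    have := congr_arg natDegree hw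
    rw [natDegree_comp, natDegree_C_mul_X a ha0, mul_one, natDegree_mul hp0 hw0] at this
    omega
  rw [eq_C_of_natDegree_eq_zero hdeg] at hw
  have hcoeff : ∀ n, p.coeff n * a ^ n = p.coeff n * w.coeff 0 := fun n => by
    simpa using congr_arg (coeff · n) hw
  ext n
  rw [coeff_C_mul_X_pow]
  split_ifs with hn
  · rw [hn, coeff_natDegree]
  by_contra hne
  refine hn (ha (?_ : a ^ n = a ^ p.natDegree))
  rw [mul_left_cancel₀ hne (hcoeff n),
    mul_left_cancel₀ (leadingCoeff_ne_zero.mpr hp0) (hcoeff p.natDegree)]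

end Monomial

section Decomposition

variable {S A M : Type*} [Semiring S] [Ring A] [AddCommGroup M] [Module A M] [Module S M]

theorem eq_zero_of_eq_unit_smul {γ : Aˣ} {p : ℕ} (hp : 1 < p) {N₀ : Submodule S M}
    (hdec : ∀ m : M, ∃! v : Fin p → N₀, m = ∑ i : Fin p, ((γ ^ (i : ℕ) : Aˣ) : A) • (v i : M))
    {u u' : M} (hu : u ∈ N₀) (hu' : u' ∈ N₀) (h : u = (γ : A) • u') : u = 0 := by
  have key := (hdec u).unique (y₁ := Pi.single ⟨0, by omega⟩ ⟨u, hu⟩)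
    (y₂ := Pi.single ⟨1, hp⟩ ⟨u', hu'⟩) ?_ ?_
  · have h0 := congr_fun key ⟨0, by omega⟩
    rw [Pi.single_eq_same, Pi.single_eq_of_ne (by simp [Fin.ext_iff])] at h0
    exact congr_arg Subtype.val h0
  · simp [Pi.single_apply, apply_ite]
  · simp [Pi.single_apply, apply_ite, h]

end Decomposition

section Spanning

variable {V : Type*} [AddCommGroup V] [Module K V] {f : ℤ × ℤ → V} {U : Submodule K V}
  (hU : ∀ i j, c ^ (-j) • f (i + 1, j) - f (i, j + 1) + f (i, j) ∈ U)

include hU in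
theorem mem_succ_of_forall_mem (hc : c ≠ 0) {i : ℤ} (h : ∀ j, f (i, j) ∈ U) (j : ℤ) :
    f (i + 1, j) ∈ U := by
  have := U.sub_mem (hU i j) (U.sub_mem (h j) (h (j + 1)))
  rwa [show c ^ (-j) • f (i + 1, j) - f (i, j + 1) + f (i, j) - (f (i, j) - f (i, j + 1)) =
    c ^ (-j) • f (i + 1, j) by abel, Submodule.smul_mem_iff _ (zpow_ne_zero _ hc)] at this

include hU in
theorem mem_of_forall_mem_succ {i : ℤ} (h : ∀ j, f (i + 1, j) ∈ U) (h0 : f (i, 0) ∈ U) (j : ℤ) :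
    f (i, j) ∈ U := by
  induction j using Int.induction_on with
  | zero => exact h0
  | succ j ih =>
    have := U.sub_mem (U.add_mem (U.smul_mem (c ^ (-(j : ℤ))) (h j)) ih) (hU i j)
    rwa [show c ^ (-(j : ℤ)) • f (i + 1, j) + f (i, j) -
      (c ^ (-(j : ℤ)) • f (i + 1, j) - f (i, j + 1) + f (i, j)) = f (i, j + 1) by abel] at this
  | pred j ih =>
    have := U.sub_mem (U.add_mem (hU i (-j - 1)) ih)
      (U.smul_mem (c ^ (-(-(j : ℤ) - 1))) (h (-j - 1)))
    rwa [sub_add_cancel, show c ^ (-(-(j : ℤ) - 1)) • f (i + 1, -j - 1) - f (i, -j) +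
      f (i, -j - 1) + f (i, -j) - c ^ (-(-(j : ℤ) - 1)) • f (i + 1, -j - 1) = f (i, -j - 1)
      by abel] at this

include hU in
theorem mem_of_mem_column_of_mem_row (hc : c ≠ 0) (hcol : ∀ j, f (0, j) ∈ U)
    (hrow : ∀ k : ℕ, f (-(k + 1 : ℤ), 0) ∈ U) (i j : ℤ) : f (i, j) ∈ U := by
  obtain ⟨n, rfl | rfl⟩ := Int.eq_nat_or_neg i
  · induction n generalizing j with
    | zero => exact hcol j
    | succ n ih =>
      rw [Nat.cast_succ]
      exact mem_succ_of_forall_mem hU hc ih j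
  · induction n generalizing j with
    | zero => simpa using hcol j
    | succ n ih => exact mem_of_forall_mem_succ hU (by simpa using ih) (by simpa using hrow n) j

end Spanning

section Operators

variable (c) (hc : c ≠ 0)

local notation "𝔼" => Module.End K (RatFunc K)

noncomputable def mulUnits : (RatFunc K)ˣ →* 𝔼ˣ :=
  Units.map (Algebra.lmul K (RatFunc K)).toMonoidHom

theorem mulUnits_zpow_apply (u : (RatFunc K)ˣ) (n : ℤ) (f : RatFunc K) :
    ((mulUnits u ^ n : 𝔼ˣ) : 𝔼) f = (u : RatFunc K) ^ n * f := by
  rw [← map_zpow, ← Units.val_zpow_eq_zpow_val]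
  rfl

noncomputable def tOp : 𝔼ˣ :=
  mulUnits (Units.mk0 RatFunc.X RatFunc.X_ne_zero)

theorem X_sub_one_ne_zero : (RatFunc.X - 1 : RatFunc K) ≠ 0 := by
  rw [← RatFunc.algebraMap_X, ← map_one (algebraMap K[X] (RatFunc K)), ← map_sub]
  exact RatFunc.algebraMap_ne_zero (X_sub_C_ne_zero 1)

noncomputable def gammaOp : 𝔼ˣ :=
  mulUnits (Units.mk0 _ X_sub_one_ne_zero) *
    LinearMap.GeneralLinearGroup.ofLinearEquiv (scale c hc).toLinearEquiv

theorem tOp_zpow_apply (n : ℤ) (f : RatFunc K) :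
    ((tOp ^ n : 𝔼ˣ) : 𝔼) f = RatFunc.X ^ n * f :=
  mulUnits_zpow_apply _ n f

theorem tOp_apply (f : RatFunc K) : ((tOp : 𝔼ˣ) : 𝔼) f = RatFunc.X * f := rfl

theorem gammaOp_apply (f : RatFunc K) :
    (gammaOp c hc : 𝔼) f = (RatFunc.X - 1) * scale c hc f := rfl

theorem gammaOp_inv_apply (f : RatFunc K) :
    (↑(gammaOp c hc)⁻¹ : 𝔼) f = (scale c hc).symm ((RatFunc.X - 1)⁻¹ * f) := by
  rw [gammaOp, mul_inv_rev, Units.val_mul, Module.End.mul_apply, ← map_inv]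
  rfl

theorem gammaOp_mul_tOp :
    (gammaOp c hc : 𝔼) * (tOp : 𝔼ˣ) =
      algebraMap K 𝔼 c * ((tOp : 𝔼ˣ) * gammaOp c hc) := by
  ext f
  simp only [Module.End.mul_apply, gammaOp_apply, Module.algebraMap_end_apply, tOp_apply, map_mul,
    scale_X, Algebra.smul_def]
  ring

theorem polyScale_symm_X_sub_one_mul_poleDenom (n : ℕ) :
    (polyScale c hc).symm ((X - 1) * poleDenom c n) = poleDenom c (n + 1) := by
  rw [poleDenom, poleDenom, Finset.prod_range_succ', map_mul, map_prod, mul_comm]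
  simp [polyScale_symm_apply, pow_succ, mul_assoc]

theorem gammaOp_zpow_neg_apply_one (n : ℕ) :
    (↑(gammaOp c hc ^ (-(n : ℤ))) : 𝔼) 1 = (algebraMap K[X] (RatFunc K) (poleDenom c n))⁻¹ := by
  induction n with
  | zero => simp [poleDenom]
  | succ n ih =>
    rw [Nat.cast_succ, neg_add_rev, zpow_add, zpow_neg_one, Units.val_mul,
      Module.End.mul_apply, ih, gammaOp_inv_apply, ← polyScale_symm_X_sub_one_mul_poleDenom c hc,
      ← scale_symm_algebraMap, ← map_inv₀ (scale c hc).symm, map_mul (algebraMap _ _), map_sub,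
      map_one, RatFunc.algebraMap_X, mul_inv]

end Operators

section Representation

variable {A : Type*} [Ring A] [Algebra K A] {γ t : Aˣ} {b : Module.Basis (ℤ × ℤ) K A}
  (hc : c ≠ 0) (hrel : (γ : A) * t = algebraMap K A c * (t * γ))
  (hb : ∀ i j : ℤ, b (i, j) = ((γ ^ i : Aˣ) : A) * ((t ^ j : Aˣ) : A))

local notation "𝔼" => Module.End K (RatFunc K)

include hrel in
theorem ne_zero_of_rel (b : Module.Basis (ℤ × ℤ) K A) : c ≠ 0 := by
  rintro rfl
  have : Nontrivial A := ⟨⟨b (0, 0), 0, b.ne_zero _⟩⟩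
  simp at hrel

noncomputable def rep : A →ₐ[K] 𝔼 := lift hc hrel hb (gammaOp c hc) tOp (gammaOp_mul_tOp c hc)

theorem rep_basis (i j : ℤ) :
    rep hc hrel hb (b (i, j)) = ((gammaOp c hc ^ i : 𝔼ˣ) : 𝔼) * ((tOp ^ j : 𝔼ˣ) : 𝔼) :=
  lift_basis ..

theorem rep_gamma : rep hc hrel hb γ = gammaOp c hc := by
  rw [show (γ : A) = b (1, 0) by simp [hb], rep_basis]
  simp

theorem rep_gamma_inv : rep hc hrel hb ↑γ⁻¹ = ↑(gammaOp c hc)⁻¹ := by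
  rw [show ((γ⁻¹ : Aˣ) : A) = b (-1, 0) by simp [hb], rep_basis]
  simp

theorem rep_t_zpow (n : ℤ) : rep hc hrel hb ↑(t ^ n) = ↑(tOp ^ n : 𝔼ˣ) := by
  rw [show ((t ^ n : Aˣ) : A) = b (0, n) by simp [hb], rep_basis]
  simp

theorem rep_t : rep hc hrel hb t = (tOp : 𝔼ˣ) := by
  simpa using rep_t_zpow hc hrel hb 1

theorem rep_aeval_t (q : K[X]) (f : RatFunc K) :
    rep hc hrel hb (aeval (t : A) q) f = algebraMap K[X] (RatFunc K) q * f := by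
  rw [← aeval_algHom_apply, rep_t]
  change aeval (Algebra.lmul K (RatFunc K) RatFunc.X) q f = _
  rw [aeval_algHom_apply, ← RatFunc.algebraMap_X, aeval_algebraMap_apply, aeval_X_left_apply]
  rfl

noncomputable def toRatFunc : A →ₗ[K] RatFunc K :=
  LinearMap.applyₗ (1 : RatFunc K) ∘ₗ (rep hc hrel hb).toLinearMap

theorem toRatFunc_apply (a : A) : toRatFunc hc hrel hb a = rep hc hrel hb a 1 := rfl

theorem toRatFunc_mul (a y : A) :
    toRatFunc hc hrel hb (a * y) = rep hc hrel hb a (toRatFunc hc hrel hb y) := by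
  simp [toRatFunc_apply]

theorem toRatFunc_basis_zero (j : ℤ) : toRatFunc hc hrel hb (b (0, j)) = RatFunc.X ^ j := by
  simp [toRatFunc_apply, rep_basis, tOp_zpow_apply]

theorem toRatFunc_basis_neg (k : ℕ) :
    toRatFunc hc hrel hb (b (-(k + 1 : ℤ), 0)) =
      (algebraMap K[X] (RatFunc K) (poleDenom c (k + 1)))⁻¹ := by
  simpa [toRatFunc_apply, rep_basis] using gammaOp_zpow_neg_apply_one c hc (k + 1)

theorem toRatFunc_gen : toRatFunc hc hrel hb ((γ : A) - t + 1) = 0 := by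
  simp [toRatFunc_apply, rep_gamma, rep_t, gammaOp_apply, tOp_apply]

include hc hrel hb in
theorem basis_mul_gen (i j : ℤ) :
    b (i, j) * ((γ : A) - t + 1) = c ^ (-j) • b (i + 1, j) - b (i, j + 1) + b (i, j) := by
  have hγ : (γ : A) = b (1, 0) := by simp [hb]
  have ht : (t : A) = b (0, 1) := by simp [hb]
  rw [mul_add, mul_sub, mul_one, hγ, ht, basis_mul_basis hc hrel hb, basis_mul_basis hc hrel hb]
  simp

noncomputable def normalMonomials (b : Module.Basis (ℤ × ℤ) K A) : ℤ ⊕ ℕ → A :=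
  Sum.elim (fun j => b (0, j)) fun k => b (-(k + 1 : ℤ), 0)

include hc hrel hb in
theorem span_gen_sup_span_normalMonomials_eq_top :
    (Submodule.span A {(γ : A) - t + 1}).restrictScalars K ⊔
      Submodule.span K (Set.range (normalMonomials b)) = ⊤ := by
  refine eq_top_iff.mpr (b.span_eq ▸ Submodule.span_le.mpr ?_)
  rintro _ ⟨⟨i, j⟩, rfl⟩
  refine mem_of_mem_column_of_mem_row (fun i j => ?_) hc
    (fun j => Submodule.mem_sup_right (Submodule.subset_span (Set.mem_range_self (Sum.inl j))))
    (fun k => Submodule.mem_sup_right (Submodule.subset_span (Set.mem_range_self (Sum.inr k)))) i j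
  exact basis_mul_gen hc hrel hb i j ▸
    Submodule.mem_sup_left (Submodule.mem_span_singleton.mpr ⟨_, rfl⟩)

theorem ker_toRatFunc :
    LinearMap.ker (toRatFunc hc hrel hb) =
      (Submodule.span A {(γ : A) - t + 1}).restrictScalars K := by
  have hle : (Submodule.span A {(γ : A) - t + 1}).restrictScalars K ≤
      LinearMap.ker (toRatFunc hc hrel hb) := by
    intro x hx
    obtain ⟨a, rfl⟩ := Submodule.mem_span_singleton.mp hx
    rw [LinearMap.mem_ker, smul_eq_mul, toRatFunc_mul, toRatFunc_gen, map_zero]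
  refine le_antisymm (fun x hx => ?_) hle
  obtain ⟨y, hy, w, hw, rfl⟩ :=
    Submodule.mem_sup.mp
      (span_gen_sup_span_normalMonomials_eq_top hc hrel hb ▸ Submodule.mem_top : x ∈ _)
  have hfam : toRatFunc hc hrel hb ∘ normalMonomials b =
      Sum.elim (fun j : ℤ => (RatFunc.X : RatFunc K) ^ j)
        fun k : ℕ => (algebraMap K[X] (RatFunc K) (poleDenom c (k + 1)))⁻¹ := by
    ext (j | k)
    exacts [toRatFunc_basis_zero hc hrel hb j, toRatFunc_basis_neg hc hrel hb k]
  have hw0 : w = 0 := by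
    refine (Submodule.range_ker_disjoint
      (hfam ▸ linearIndependent_zpow_sum_poleDenom_inv c hc)).le_bot ⟨hw, ?_⟩
    have hy0 : toRatFunc hc hrel hb y = 0 := hle hy
    rwa [LinearMap.mem_ker, map_add, hy0, zero_add] at hx
  rwa [hw0, add_zero]

theorem exists_C_mul_X_pow_mem (hinj : Function.Injective (c⁻¹ ^ · : ℕ → K))
    {V : Submodule K (RatFunc K)} (hV : ∀ a g, g ∈ V → rep hc hrel hb a g ∈ V) {f : RatFunc K}
    (hf : f ∈ V) (hf0 : f ≠ 0) :
    ∃ (l : K) (d : ℕ), l ≠ 0 ∧ algebraMap K[X] (RatFunc K) (C l * X ^ d) ∈ V := by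
  have hpoly : ∀ q g, g ∈ V → algebraMap K[X] (RatFunc K) q * g ∈ V := fun q g hg =>
    rep_aeval_t hc hrel hb q g ▸ hV _ g hg
  let J : Ideal K[X] :=
    { carrier := {q | algebraMap K[X] (RatFunc K) q ∈ V}
      add_mem' := fun hp hq => by simpa using add_mem hp hq
      zero_mem' := by simp
      smul_mem' := fun r q hq => by simpa using hpoly r _ hq }
  have hnum : f.num ∈ J := by
    have hden := (div_eq_iff (RatFunc.algebraMap_ne_zero (RatFunc.denom_ne_zero f))).mp
      (RatFunc.num_div_denom f)
    change algebraMap K[X] (RatFunc K) f.num ∈ V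
    rw [hden, mul_comm]
    exact hpoly f.denom f hf
  -- `γ⁻¹` sends `q` to `q(c⁻¹X) / (c⁻¹X - 1)`
  have hscale : ∀ q ∈ J, (polyScale c hc).symm q ∈ J := by
    intro q hq
    have := hpoly ((polyScale c hc).symm (X - 1)) _ (hV (↑γ⁻¹) _ hq)
    have hX : (RatFunc.X - 1 : RatFunc K) = algebraMap K[X] (RatFunc K) (X - 1) := by simp
    have hne : (scale c hc).symm (algebraMap K[X] (RatFunc K) (X - 1)) ≠ 0 :=
      (_root_.map_ne_zero _).mpr
        (RatFunc.algebraMap_ne_zero (by simpa using X_sub_C_ne_zero (1 : K)))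
    rwa [rep_gamma_inv, gammaOp_inv_apply, hX, map_mul, map_inv₀,
      ← scale_symm_algebraMap c hc (X - 1), mul_inv_cancel_left₀ hne, scale_symm_algebraMap] at this
  set g := Submodule.IsPrincipal.generator J
  have hg : g ∈ J := Submodule.IsPrincipal.generator_mem J
  have hg0 : g ≠ 0 := fun h0 => RatFunc.num_ne_zero hf0 (by
    rw [← Submodule.mem_bot K[X], ← (Submodule.IsPrincipal.eq_bot_iff_generator_eq_zero J).mpr h0]
    exact hnum)
  refine ⟨g.leadingCoeff, g.natDegree, leadingCoeff_ne_zero.mpr hg0, ?_⟩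
  rw [← eq_C_mul_X_pow_of_dvd_comp hinj ((polyScale_symm_apply c hc g) ▸
    (Submodule.IsPrincipal.mem_iff_generator_dvd J).mp (hscale g hg))]
  exact hg

theorem exists_rep_apply_eq_one (hinj : Function.Injective (c⁻¹ ^ · : ℕ → K)) {f : RatFunc K}
    (hf : f ≠ 0) : ∃ a : A, rep hc hrel hb a f = 1 := by
  set V := LinearMap.range (LinearMap.applyₗ f ∘ₗ (rep hc hrel hb).toLinearMap)
  have hV : ∀ a g, g ∈ V → rep hc hrel hb a g ∈ V := by
    rintro a _ ⟨a', rfl⟩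
    exact ⟨a * a', by simp⟩
  obtain ⟨l, d, hl, hmem⟩ := exists_C_mul_X_pow_mem hc hrel hb hinj hV ⟨1, by simp⟩ hf
  obtain ⟨a, ha⟩ := hV (l⁻¹ • ↑(t ^ (-(d : ℤ)))) _ hmem
  refine ⟨a, ha.trans ?_⟩
  rw [map_smul, rep_t_zpow, LinearMap.smul_apply, tOp_zpow_apply, map_mul, map_pow,
    RatFunc.algebraMap_C, RatFunc.algebraMap_X, RatFunc.smul_eq_C_mul, zpow_neg, ← zpow_natCast]
  field_simp
  rw [div_eq_one_iff_eq (zpow_ne_zero _ RatFunc.X_ne_zero), mul_right_comm, ← map_mul, one_div,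
    inv_mul_cancel₀ hl, map_one, one_mul]

section Module

variable {M : Type*} [AddCommGroup M] [Module A M] [Module K M] [IsScalarTower K A M]
  (e : M ≃ₗ[A] A ⧸ Submodule.span A {(γ : A) - t + 1})

noncomputable def embed : M →ₗ[K] RatFunc K :=
  ((Submodule.span A {(γ : A) - t + 1}).restrictScalars K).liftQ (toRatFunc hc hrel hb)
      (ker_toRatFunc hc hrel hb).ge ∘ₗ
    (Submodule.Quotient.restrictScalarsEquiv K _).symm.toLinearMap ∘ₗ
    (e.restrictScalars K).toLinearMap

theorem embed_apply {m : M} {a : A} (h : e m = Submodule.Quotient.mk a) :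
    embed hc hrel hb e m = toRatFunc hc hrel hb a := by
  simp [embed, h]

theorem embed_injective : Function.Injective (embed hc hrel hb e) := by
  simp only [embed, LinearMap.coe_comp, LinearEquiv.coe_coe]
  exact (LinearMap.ker_eq_bot.mp
    (Submodule.ker_liftQ_eq_bot' _ _ (ker_toRatFunc hc hrel hb).symm)).comp
      ((LinearEquiv.injective _).comp (LinearEquiv.injective _))

theorem embed_smul (a : A) (m : M) :
    embed hc hrel hb e (a • m) = rep hc hrel hb a (embed hc hrel hb e m) := by
  obtain ⟨y, hy⟩ := Submodule.Quotient.mk_surjective _ (e m)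
  rw [embed_apply hc hrel hb e (a := a * y) (by rw [map_smul, ← hy]; rfl),
    embed_apply hc hrel hb e hy.symm, toRatFunc_mul]

theorem embed_symm_mk_one : embed hc hrel hb e (e.symm (Submodule.Quotient.mk 1)) = 1 := by
  simp [embed_apply hc hrel hb e (e.apply_symm_apply _), toRatFunc_apply]

include hc hrel hb in
theorem symm_mk_one_ne_zero : e.symm (Submodule.Quotient.mk 1) ≠ 0 := fun h =>
  one_ne_zero ((embed_symm_mk_one hc hrel hb e).symm.trans (by rw [h, map_zero]))

theorem smul_symm_mk_one (a : A) :
    a • e.symm (Submodule.Quotient.mk 1) = e.symm (Submodule.Quotient.mk a) := by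
  rw [← map_smul, ← Submodule.Quotient.mk_smul, smul_eq_mul, mul_one]

include hc hrel hb e in
theorem isSimpleModule (hroot : ∀ n : ℕ, 0 < n → c ^ n ≠ 1) : IsSimpleModule A M := by
  have hinj : Function.Injective (c⁻¹ ^ · : ℕ → K) := fun m n h =>
    pow_injective_of_pow_ne_one hc hroot (by simpa using h)
  have hne : ∀ x : M, x ≠ 0 → embed hc hrel hb e x ≠ 0 := fun x hx =>
    (map_ne_zero_iff _ (embed_injective hc hrel hb e)).mpr hx
  refine isSimpleModule_iff_toSpanSingleton_surjective.mpr
    ⟨⟨_, 0, symm_mk_one_ne_zero hc hrel hb e⟩,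
      fun x hx y => ?_⟩
  obtain ⟨a, ha⟩ := exists_rep_apply_eq_one hc hrel hb hinj (hne x hx)
  obtain ⟨a', ha'⟩ := Submodule.Quotient.mk_surjective _ (e y)
  refine ⟨a' * a, ?_⟩
  have hax : a • x = e.symm (Submodule.Quotient.mk 1) := embed_injective hc hrel hb e (by
    rw [embed_smul, ha, embed_symm_mk_one])
  rw [LinearMap.toSpanSingleton_apply, mul_smul, hax, smul_symm_mk_one, ha', e.symm_apply_apply]

-- `M` is one-dimensional over `K(t)`, so `n` and `γ n` are `K(t)`-proportional.
include hc hrel hb e in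
theorem exists_aeval_smul_eq_gamma_smul {n : M} (hn : n ≠ 0) :
    ∃ r s : K[X], aeval (t : A) r • n ≠ 0 ∧
      aeval (t : A) r • n = (γ : A) • (aeval (t : A) s • n) := by
  set Ψ := embed hc hrel hb e
  have hΨinj := embed_injective hc hrel hb e
  have hΨq : ∀ (q : K[X]) (m : M), Ψ (aeval (t : A) q • m) = algebraMap K[X] (RatFunc K) q * Ψ m :=
    fun q m => by rw [embed_smul, rep_aeval_t]
  have hΨ0 : ∀ m : M, m ≠ 0 → Ψ m ≠ 0 := fun m hm => (map_ne_zero_iff _ hΨinj).mpr hm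
  have hγn : Ψ ((γ : A) • n) = (RatFunc.X - 1) * scale c hc (Ψ n) := by
    rw [embed_smul, rep_gamma, gammaOp_apply]
  obtain ⟨r, s, hs, hrs⟩ := IsFractionRing.div_surjective K[X] (Ψ ((γ : A) • n) / Ψ n)
  have hs0 : algebraMap K[X] (RatFunc K) s ≠ 0 :=
    RatFunc.algebraMap_ne_zero (nonZeroDivisors.ne_zero hs)
  have hsr : algebraMap K[X] (RatFunc K) r * Ψ n =
      algebraMap K[X] (RatFunc K) s * Ψ ((γ : A) • n) := by
    rw [div_eq_div_iff hs0 (hΨ0 n hn)] at hrs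
    rw [hrs, mul_comm]
  refine ⟨r, (polyScale c hc).symm s, fun h0 => ?_, hΨinj ?_⟩
  · have := congr_arg Ψ h0
    rw [hΨq, map_zero, hsr] at this
    exact mul_ne_zero hs0 (hΨ0 _ (γ.isUnit.smul_eq_zero.not.mpr hn)) this
  · rw [hΨq, hsr, hγn, embed_smul, rep_gamma, gammaOp_apply, hΨq, map_mul, scale_algebraMap,
      AlgEquiv.apply_symm_apply]
    ring

include hc hrel hb e in
theorem not_exists_induced {p : ℕ} (hp : 1 < p) :
    ¬ ∃ N₀ : Submodule K M,
        (∀ a ∈ Algebra.adjoin K {((γ ^ (p : ℤ) : Aˣ) : A), ((γ ^ (-(p : ℤ)) : Aˣ) : A),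
            ((t : Aˣ) : A), ((t⁻¹ : Aˣ) : A)},
          ∀ m ∈ N₀, a • m ∈ N₀) ∧
        (∀ m : M, ∃! v : Fin p → N₀,
          m = ∑ i : Fin p, ((γ ^ (i : ℕ) : Aˣ) : A) • (v i : M)) := by
  rintro ⟨N₀, hstab, hdec⟩
  obtain ⟨n, hnN, hn0⟩ : ∃ n ∈ N₀, n ≠ 0 := by
    obtain ⟨v, hv, -⟩ := hdec (e.symm (Submodule.Quotient.mk 1))
    obtain ⟨i, -, hi⟩ :=
      Finset.exists_ne_zero_of_sum_ne_zero (hv ▸ symm_mk_one_ne_zero hc hrel hb e)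
    exact ⟨v i, (v i).2, fun h => hi (by rw [h, smul_zero])⟩
  have hB : ∀ q : K[X], aeval (t : A) q ∈ Algebra.adjoin K {((γ ^ (p : ℤ) : Aˣ) : A),
      ((γ ^ (-(p : ℤ)) : Aˣ) : A), ((t : Aˣ) : A), ((t⁻¹ : Aˣ) : A)} := fun q =>
    Algebra.adjoin_mono (by simp) (aeval_mem_adjoin_singleton K (t : A))
  obtain ⟨r, s, hr0, hrs⟩ := exists_aeval_smul_eq_gamma_smul hc hrel hb e hn0
  exact hr0 (eq_zero_of_eq_unit_smul hp hdec (hstab _ (hB r) n hnN) (hstab _ (hB s) n hnN) hrs)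

end Module

end Representation

end QuantumTorus

open QuantumTorus

/-- Let `K` be a field and `c ∈ K*` not a root of unity. Let
`A = K⟨γ^{±1}, t^{±1}⟩/(γt - ctγ)` be the quantum torus: the `K`-algebra with
basis `{γ^i t^j : i, j ∈ ℤ}` (given by units `γ`, `t`) and relation `γt = c·tγ`.
Then the `A`-module `M = A/A(γ - t + 1)` is irreducible, but for every prime
`p ≥ 2` it is not induced from the subalgebra `B` generated by `γ^p, γ^{-p},
t, t⁻¹` — i.e. `M` is not the internal direct sum `⊕_{0 ≤ i < p} γ^i N₀` for any
`B`-stable subspace `N₀` (equivalently `M ≇ A ⊗_B N` for any `B`-module `N`).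
Consequently the corresponding representation of the Heisenberg group over `ℤ`
(on which the central element acts by `c`) is irreducible but not finitely
induced from any representation of a proper subgroup. -/
theorem stmt15 {K : Type} [Field K] (c : K)
    (hroot : ∀ n : ℕ, 0 < n → c ^ n ≠ 1)
    (A : Type) [Ring A] [Algebra K A] (γ t : Aˣ)
    (hrel : (γ : A) * t = algebraMap K A c * ((t : A) * γ))
    (b : Module.Basis (ℤ × ℤ) K A)
    (hb : ∀ i j : ℤ, b (i, j) = ((γ ^ i : Aˣ) : A) * ((t ^ j : Aˣ) : A))
    (M : Type) [AddCommGroup M] [Module A M] [Module K M] [IsScalarTower K A M]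
    (e : M ≃ₗ[A] (A ⧸ (Submodule.span A {(γ : A) - (t : A) + 1} : Submodule A A))) :
    IsSimpleModule A M ∧
    ∀ p : ℕ, p.Prime →
      ¬ ∃ N₀ : Submodule K M,
        (∀ a ∈ Algebra.adjoin K {((γ ^ (p : ℤ) : Aˣ) : A), ((γ ^ (-(p : ℤ)) : Aˣ) : A),
            ((t : Aˣ) : A), ((t⁻¹ : Aˣ) : A)},
          ∀ m ∈ N₀, a • m ∈ N₀) ∧
        (∀ m : M, ∃! v : Fin p → N₀,
          m = ∑ i : Fin p, ((γ ^ (i : ℕ) : Aˣ) : A) • (v i : M)) := by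
  have hc : c ≠ 0 := ne_zero_of_rel hrel b
  exact ⟨isSimpleModule hc hrel hb e hroot, fun p hp => not_exists_induced hc hrel hb e hp.one_lt⟩
end
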